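/- arXiv:1102.4100 — 7 statements merged into one kernel-verified Lean document; each statement's English description precedes it below -/
import Mathlib

section
/- Let k, t, n be integers with k odd and 0 < k <= 2t+1 <= n. Then there exists a (t+1)-geodesic P in H_n such that inst(maj_t(k), P) >= 2t+1 and such that maj_t(k) assigns colour 0 to the last point of P. In particular, inst(maj_t(k)) >= 2t+1. -/
open Finset

/-- The number of entries of a point of the hypercube equal to `1` (`true`). -/
def onesCount {n : ℕ} (x : Fin n → Bool) : ℕ :=
  (univ.filter fun i => x i = true).card

/-- The number of entries of a point of the hypercube equal to `0` (`false`). -/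
def zerosCount {n : ℕ} (x : Fin n → Bool) : ℕ :=
  (univ.filter fun i => x i = false).card

/-- `P` is a geodesic in the `n`-hypercube: consecutive points differ in exactly one
entry, and each of the `n` entries changes at exactly one step. -/
def IsGeodesic {n : ℕ} (P : Fin (n+1) → Fin n → Bool) : Prop :=
  ∃ σ : Equiv.Perm (Fin n), ∀ j : Fin n, ∀ ℓ : Fin n,
    P j.succ ℓ = if σ ℓ = j then !(P j.castSucc ℓ) else P j.castSucc ℓ

/-- The number of jumps of the geodesic `P` in the colouring `f`. -/
def jumps {n : ℕ} (f : (Fin n → Bool) → Bool) (P : Fin (n+1) → Fin n → Bool) : ℕ :=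
  (univ.filter fun j : Fin n => f (P j.succ) ≠ f (P j.castSucc)).card

/-- `inst f` is the maximum of `jumps f P` over all geodesics `P`. -/
noncomputable def inst {n : ℕ} (f : (Fin n → Bool) → Bool) : ℕ :=
  sSup {m | ∃ P : Fin (n+1) → Fin n → Bool, IsGeodesic P ∧ m = jumps f P}

/-- The number of `1`s among the first `k` entries of `x`. -/
def firstOnes {n : ℕ} (k : ℕ) (x : Fin n → Bool) : ℕ :=
  (univ.filter fun i : Fin n => i.val < k ∧ x i = true).card

/-- The majority colouring `maj_t(k)` (for odd `k`): canonically `0` on `B_t(0^n)`,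
`1` on `B_t(1^n)`, and elsewhere the majority colour of the first `k` entries. -/
def maj {n : ℕ} (t k : ℕ) (x : Fin n → Bool) : Bool :=
  if onesCount x ≤ t then false
  else if zerosCount x ≤ t then true
  else decide (k < 2 * firstOnes k x)

/-!
Write `k = 2s + 1`. Rotate the first `t + s + 1` coordinates so that the first `k` of them
sit at the positions `t - s, …, t + s`, the middle of `0, …, 2t`. The points of the geodesic
are the indicators of a window `[lo, hi)` of positions: it starts as `[0, t + 1)`, its two ends
advance alternately until it is `[t + 1, 2t + 1)`, and then its right end runs up to `n`; every
position enters or leaves the window exactly once. During the first `2t + 1` steps the window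
alternately has `t + 1` elements, at least `s + 1` of them among the first `k` coordinates
(colour `1`), and `t` elements (colour `0`). The final window `[t + 1, n)` has colour `0`:
either it has `t` elements, or it misses `t + 1` coordinates and only `s` of the first `k`.
-/

open Function

section Hypercube

variable {n : ℕ}

lemma card_filter_val_mem_Ico (a b : ℕ) :
    #{i : Fin n | a ≤ (i : ℕ) ∧ (i : ℕ) < b} = min n b - a := by
  rw [← card_map Fin.valEmbedding, ← Nat.card_Ico]
  congr 1
  ext i
  simp only [mem_map, mem_filter, mem_univ, true_and, Fin.valEmbedding_apply, mem_Ico]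
  constructor
  · rintro ⟨i, hi, rfl⟩
    omega
  · intro hi
    exact ⟨⟨i, by omega⟩, by dsimp only; omega, rfl⟩

lemma card_filter_comp_of_injective (e : Fin n → Fin n) (he : Injective e)
    (p : Fin n → Prop) [DecidablePred p] : #{i | p (e i)} = #{i | p i} :=
  card_bijective e he.bijective_of_finite (by simp)

lemma onesCount_add_zerosCount (x : Fin n → Bool) : onesCount x + zerosCount x = n := by
  simpa [onesCount, zerosCount] using
    card_filter_add_card_filter_not (s := (univ : Finset (Fin n))) (fun i => x i = true)

lemma jumps_le (f : (Fin n → Bool) → Bool) (P : Fin (n+1) → Fin n → Bool) : jumps f P ≤ n :=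
  (card_filter_le _ _).trans_eq (card_fin n)

lemma jumps_le_inst {f : (Fin n → Bool) → Bool} {P : Fin (n+1) → Fin n → Bool}
    (hP : IsGeodesic P) : jumps f P ≤ inst f :=
  le_csSup ⟨n, by rintro m ⟨Q, -, rfl⟩; exact jumps_le f Q⟩ ⟨P, hP, rfl⟩

lemma le_jumps {f : (Fin n → Bool) → Bool} {P : Fin (n+1) → Fin n → Bool} {r : ℕ} (hr : r ≤ n)
    (h : ∀ j : Fin n, (j : ℕ) < r → f (P j.succ) ≠ f (P j.castSucc)) : r ≤ jumps f P := by
  calc r = #{j : Fin n | (j : ℕ) < r} := by rw [Fin.card_filter_val_lt, min_eq_right hr]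
    _ ≤ jumps f P := card_le_card fun j hj => mem_filter.2 ⟨mem_univ j, h j (mem_filter.1 hj).2⟩

lemma isGeodesic_of_injective {P : Fin (n+1) → Fin n → Bool} (τ : Fin n → Fin n)
    (hτ : Injective τ)
    (hP : ∀ j ℓ, P j.succ ℓ = if τ ℓ = j then !P j.castSucc ℓ else P j.castSucc ℓ) :
    IsGeodesic P :=
  ⟨Equiv.ofBijective τ hτ.bijective_of_finite, hP⟩

lemma maj_eq_false_of_onesCount_le {t k : ℕ} {x : Fin n → Bool} (h : onesCount x ≤ t) :
    maj t k x = false := by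
  simp [maj, h]

lemma maj_eq_true_of_lt {t k : ℕ} {x : Fin n → Bool} (h : t < onesCount x)
    (hk : k < 2 * firstOnes k x) : maj t k x = true := by
  simp [maj, h.not_ge, hk]

lemma maj_eq_false_of_lt {t k : ℕ} {x : Fin n → Bool} (h : t < zerosCount x)
    (hk : 2 * firstOnes k x ≤ k) : maj t k x = false := by
  simp [maj, h.not_ge, hk.not_gt]

end Hypercube

section SlidingWindow

variable (s t : ℕ)

def windowPos (ℓ : ℕ) : ℕ :=
  if ℓ ≤ 2 * s then ℓ + (t - s) else if ℓ ≤ s + t then ℓ - (2 * s + 1) else ℓ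

def windowLo (m : ℕ) : ℕ := min ((m + 1) / 2) (t + 1)

def windowHi (m : ℕ) : ℕ := max (t + 1 + m / 2) m

def windowFlipTime (p : ℕ) : ℕ :=
  if p ≤ t then 2 * p else if p ≤ 2 * t then 2 * p - (2 * t + 1) else p

def windowPath (n : ℕ) (m : Fin (n + 1)) (ℓ : Fin n) : Bool :=
  decide (windowLo t m ≤ windowPos s t ℓ ∧ windowPos s t ℓ < windowHi t m)

variable {s t}

lemma windowPos_lt {n ℓ : ℕ} (hn : s + t < n) (hℓ : ℓ < n) : windowPos s t ℓ < n := by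
  unfold windowPos; split_ifs <;> omega

lemma windowPos_injective (h : s ≤ t) : Injective (windowPos s t) := by
  intro a b hab; unfold windowPos at hab; split_ifs at hab <;> omega

lemma lt_iff_windowPos_mem (h : s ≤ t) (ℓ : ℕ) :
    ℓ < 2 * s + 1 ↔ t - s ≤ windowPos s t ℓ ∧ windowPos s t ℓ < t + s + 1 := by
  unfold windowPos; split_ifs <;> omega

lemma windowFlipTime_lt {n p : ℕ} (hn : 2 * t + 1 ≤ n) (hp : p < n) :
    windowFlipTime t p < n := by
  unfold windowFlipTime; split_ifs <;> omega

lemma windowFlipTime_injective : Injective (windowFlipTime t) := by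
  intro a b hab; unfold windowFlipTime at hab; split_ifs at hab <;> omega

lemma mem_window_succ_iff (m p : ℕ) :
    (windowLo t (m + 1) ≤ p ∧ p < windowHi t (m + 1)) ↔
      ((windowLo t m ≤ p ∧ p < windowHi t m) ↔ windowFlipTime t p ≠ m) := by
  unfold windowLo windowHi windowFlipTime; split_ifs <;> omega

variable {n : ℕ}

lemma windowHi_le {m : ℕ} (hn : 2 * t + 1 ≤ n) (hm : m ≤ n) : windowHi t m ≤ n := by
  unfold windowHi; omega

lemma card_filter_windowPos (hst : s ≤ t) (hn : s + t < n) (p : ℕ → Prop) [DecidablePred p] :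
    #{ℓ : Fin n | p (windowPos s t ℓ)} = #{i : Fin n | p i} :=
  card_filter_comp_of_injective (fun ℓ => ⟨windowPos s t ℓ, windowPos_lt hn ℓ.isLt⟩)
    (fun _ _ h => Fin.ext (windowPos_injective hst (congrArg Fin.val h))) fun i => p i

lemma isGeodesic_windowPath (hst : s ≤ t) (hn : 2 * t + 1 ≤ n) :
    IsGeodesic (windowPath s t n) := by
  refine isGeodesic_of_injective (fun ℓ => ⟨windowFlipTime t (windowPos s t ℓ),
      windowFlipTime_lt hn (windowPos_lt (by omega) ℓ.isLt)⟩)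
    (fun _ _ h => Fin.ext <|
      windowPos_injective hst <| windowFlipTime_injective <| congrArg Fin.val h)
    fun j ℓ => ?_
  simp only [windowPath, Fin.val_succ, Fin.val_castSucc, Fin.ext_iff, mem_window_succ_iff]
  split_ifs with h <;> simp [h, ← decide_not]

lemma onesCount_windowPath (hst : s ≤ t) (hn : 2 * t + 1 ≤ n) (m : Fin (n + 1)) :
    onesCount (windowPath s t n m) = windowHi t m - windowLo t m := by
  simp only [onesCount, windowPath, decide_eq_true_eq]
  rw [card_filter_windowPos hst (by omega) fun i => windowLo t m ≤ i ∧ i < windowHi t m,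
    card_filter_val_mem_Ico, min_eq_right (windowHi_le hn m.is_le)]

lemma firstOnes_windowPath (hst : s ≤ t) (hn : 2 * t + 1 ≤ n) (m : Fin (n + 1)) :
    firstOnes (2 * s + 1) (windowPath s t n m) =
      min (windowHi t m) (t + s + 1) - max (windowLo t m) (t - s) := by
  simp only [firstOnes, windowPath, decide_eq_true_eq, lt_iff_windowPos_mem hst]
  rw [card_filter_windowPos hst (by omega) fun i => (t - s ≤ i ∧ i < t + s + 1) ∧
    windowLo t m ≤ i ∧ i < windowHi t m]
  have := windowHi_le hn m.is_le
  rw [filter_congr fun (i : Fin n) _ => show _ ↔ max (windowLo t m) (t - s) ≤ i ∧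
    i < min (windowHi t m) (t + s + 1) by omega, card_filter_val_mem_Ico]
  omega

lemma maj_windowPath_of_le (hst : s ≤ t) (hn : 2 * t + 1 ≤ n) {m : Fin (n + 1)}
    (hm : (m : ℕ) ≤ 2 * t + 1) :
    maj t (2 * s + 1) (windowPath s t n m) = decide ((m : ℕ) % 2 = 0) := by
  have hones := onesCount_windowPath hst hn m
  unfold windowHi windowLo at hones
  by_cases hpar : (m : ℕ) % 2 = 0
  · have hfirst := firstOnes_windowPath hst hn m
    unfold windowHi windowLo at hfirst
    rw [maj_eq_true_of_lt (by omega) (by omega), decide_eq_true hpar]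
  · rw [maj_eq_false_of_onesCount_le (by omega), decide_eq_false hpar]

lemma maj_windowPath_last (hst : s ≤ t) (hn : 2 * t + 1 ≤ n) :
    maj t (2 * s + 1) (windowPath s t n (Fin.last n)) = false := by
  rcases hn.eq_or_lt with rfl | hlt
  · simpa using maj_windowPath_of_le hst le_rfl (m := Fin.last (2 * t + 1)) le_rfl
  have hones := onesCount_windowPath hst hn (Fin.last n)
  have hfirst := firstOnes_windowPath hst hn (Fin.last n)
  have hsum := onesCount_add_zerosCount (windowPath s t n (Fin.last n))
  unfold windowHi windowLo at hones hfirst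
  simp only [Fin.val_last] at hones hfirst
  exact maj_eq_false_of_lt (by omega) (by omega)

end SlidingWindow

theorem maj_geq_general (n t k : ℕ) (hodd : Odd k) (hk2t : k ≤ 2 * t + 1)
    (hn : 2 * t + 1 ≤ n) :
    (∃ P : Fin (n+1) → Fin n → Bool, IsGeodesic P ∧ onesCount (P 0) = t + 1 ∧
      2 * t + 1 ≤ jumps (maj t k) P ∧ maj t k (P (Fin.last n)) = false) ∧
    2 * t + 1 ≤ inst (maj (n := n) t k) := by
  obtain ⟨s, rfl⟩ := hodd
  have hst : s ≤ t := by omega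
  have hgeo := isGeodesic_windowPath hst hn
  have hjumps : 2 * t + 1 ≤ jumps (maj t (2 * s + 1)) (windowPath s t n) := by
    refine le_jumps hn fun j hj => ?_
    rw [maj_windowPath_of_le hst hn (m := j.succ) (by rw [Fin.val_succ]; omega),
      maj_windowPath_of_le hst hn (m := j.castSucc) (by rw [Fin.val_castSucc]; omega),
      Fin.val_succ, Fin.val_castSucc, ne_eq, decide_eq_decide]
    omega
  have hstart : onesCount (windowPath s t n 0) = t + 1 := by
    rw [onesCount_windowPath hst hn]; simp [windowHi, windowLo]
  exact ⟨⟨windowPath s t n, hgeo, hstart, hjumps, maj_windowPath_last hst hn⟩,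
    hjumps.trans (jumps_le_inst hgeo)⟩

/-- For `k` odd with `0 < k ≤ 2t+1 ≤ n`, there is a `(t+1)`-geodesic jumping at least
`2t+1` times in `maj_t(k)` whose last point has colour `0`; in particular
`inst (maj_t(k)) ≥ 2t+1`. -/
theorem maj_geq (n t k : ℕ) (hodd : Odd k) (hk : 0 < k) (hk2t : k ≤ 2 * t + 1)
    (hn : 2 * t + 1 ≤ n) :
    (∃ P : Fin (n+1) → Fin n → Bool, IsGeodesic P ∧ onesCount (P 0) = t + 1 ∧
      2 * t + 1 ≤ jumps (maj t k) P ∧ maj t k (P (Fin.last n)) = false) ∧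
    2 * t + 1 ≤ inst (maj (n := n) t k) :=
  maj_geq_general n t k hodd hk2t hn
end

section
/- Let m, s, t be nonnegative integers with m >= (s+1)(t+1), let Q be a partition of {1, ..., m} into s+1 sets each of size at least t+1, and let j be 0 or 1. Then the colouring a^Q_j of H_m respects B_s(j^m) and B_t((1-j)^m); that is, a^Q_j(x) = j for every point x of H_m having at most s entries different from j, and a^Q_j(x) = 1-j for every point x having at most t entries equal to j. -/
open Finset

/-- The colouring `a^Q_j`: a point gets colour `j` iff in at least one set of `Q`
all of its entries are `j`. -/
def aQ {m : ℕ} (Q : Finset (Finset (Fin m))) (j : Bool) (x : Fin m → Bool) : Bool :=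
  if ∃ S ∈ Q, ∀ i ∈ S, x i = j then j else !j

/-- For a partition `Q` of the index set into `s+1` sets of size at least `t+1`
(with `m ≥ (s+1)(t+1)`), the colouring `a^Q_j` respects `B_s(j^m)` and `B_t((1-j)^m)`:
it equals `j` on points with at most `s` entries different from `j`, and `1-j` on
points with at most `t` entries equal to `j`. -/
theorem aQ_respects (m s t : ℕ) (hm : (s + 1) * (t + 1) ≤ m)
    (Q : Finset (Finset (Fin m))) (hQcard : Q.card = s + 1)
    (hQsize : ∀ S ∈ Q, t + 1 ≤ S.card)
    (hQdisj : ∀ S ∈ Q, ∀ T ∈ Q, S ≠ T → Disjoint S T)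
    (hQcover : Q.biUnion id = univ) (j : Bool) :
    (∀ x : Fin m → Bool, (univ.filter fun i => x i ≠ j).card ≤ s → aQ Q j x = j) ∧
    (∀ x : Fin m → Bool, (univ.filter fun i => x i = j).card ≤ t → aQ Q j x = !j) := by
  classical
  have hd : 0 < m := lt_of_lt_of_le (by positivity) hm
  constructor
  · intro x hx
    set B := univ.filter fun i => x i ≠ j with hB
    set T := Q.filter (fun S => ∃ i ∈ S, x i ≠ j) with hT
    let g : Finset (Fin m) → Fin m := fun S =>
      if h : ∃ i ∈ S, x i ≠ j then h.choose else ⟨0, hd⟩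
    have hg : ∀ S, (h : ∃ i ∈ S, x i ≠ j) → g S ∈ S ∧ x (g S) ≠ j := by
      intro S h
      rw [show g S = h.choose from dif_pos h]
      exact ⟨h.choose_spec.1, h.choose_spec.2⟩
    have hgmem : ∀ S ∈ T, g S ∈ B := by
      intro S hS
      have h := (mem_filter.mp hS).2
      simp only [hB, mem_filter, mem_univ, true_and]
      exact (hg S h).2
    have hginj : Set.InjOn g T := by
      intro S hS S' hS' he
      rw [hT] at hS hS'
      simp only [coe_filter, Set.mem_setOf_eq] at hS hS'
      by_contra hne
      have hdisj := hQdisj S hS.1 S' hS'.1 hne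
      have h1 := (hg S hS.2).1
      have h2 := (hg S' hS'.2).1
      rw [he] at h1
      exact (Finset.disjoint_left.mp hdisj h1) h2
    have hcard : T.card ≤ B.card := Finset.card_le_card_of_injOn g hgmem hginj
    have hlt : T.card < Q.card := by
      calc T.card ≤ B.card := hcard
        _ ≤ s := hx
        _ < s + 1 := Nat.lt_succ_self s
        _ = Q.card := hQcard.symm
    obtain ⟨S, hSQ, hST⟩ : ∃ S ∈ Q, S ∉ T := by
      by_contra h
      push_neg at h
      exact absurd (Finset.card_le_card h) (Nat.not_le.mpr hlt)
    have hall : ∀ i ∈ S, x i = j := by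
      intro i hi
      by_contra hne
      exact hST (mem_filter.mpr ⟨hSQ, ⟨i, hi, hne⟩⟩)
    unfold aQ
    rw [if_pos ⟨S, hSQ, hall⟩]
  · intro x hx
    unfold aQ
    rw [if_neg]
    rintro ⟨S, hSQ, hall⟩
    have hsub : S ⊆ univ.filter fun i => x i = j := by
      intro i hi
      exact mem_filter.mpr ⟨mem_univ i, hall i hi⟩
    have := (hQsize S hSQ).trans ((Finset.card_le_card hsub).trans hx)
    omega
end

section
/- Let m, s, t be nonnegative integers with m >= (s+1)(t+1), let Q be a partition of {1, ..., m} into s+1 sets each of size at least t+1, and let j be 0 or 1. Then every geodesic in H_m jumps at most 2(s+1) times in the colouring a^Q_j; that is, inst(a^Q_j) <= 2(s+1). -/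
open Finset

lemma geo_formula {n : ℕ} {P : Fin (n+1) → Fin n → Bool} {σ : Equiv.Perm (Fin n)}
    (hP : ∀ j : Fin n, ∀ ℓ : Fin n,
      P j.succ ℓ = if σ ℓ = j then !(P j.castSucc ℓ) else P j.castSucc ℓ)
    (ℓ : Fin n) (k : Fin (n+1)) :
    P k ℓ = if (k:ℕ) ≤ (σ ℓ : ℕ) then P 0 ℓ else !(P 0 ℓ) := by
  induction k using Fin.induction with
  | zero => simp
  | succ i ih =>
    rw [hP i ℓ, ih, Fin.val_succ, Fin.coe_castSucc]
    by_cases h : σ ℓ = i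
    · have hv : (σ ℓ : ℕ) = (i : ℕ) := by rw [h]
      rw [if_pos h, if_pos (by omega), if_neg (by omega)]
    · have hv : (σ ℓ : ℕ) ≠ (i : ℕ) := fun hc => h (Fin.ext hc)
      rw [if_neg h]
      by_cases h2 : (i:ℕ) ≤ (σ ℓ:ℕ)
      · rw [if_pos h2, if_pos (by omega)]
      · rw [if_neg h2, if_neg (by omega)]

lemma interval_changes {n : ℕ} (a b : ℕ) :
    (univ.filter fun k : Fin n =>
      ¬((a ≤ (k:ℕ)+1 ∧ (k:ℕ)+1 ≤ b) ↔ (a ≤ (k:ℕ) ∧ (k:ℕ) ≤ b))).card ≤ 2 := by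
  have hsub : (univ.filter fun k : Fin n =>
      ¬((a ≤ (k:ℕ)+1 ∧ (k:ℕ)+1 ≤ b) ↔ (a ≤ (k:ℕ) ∧ (k:ℕ) ≤ b))) ⊆
      (univ.filter fun k : Fin n => (k:ℕ)+1 = a) ∪ (univ.filter fun k : Fin n => (k:ℕ) = b) := by
    intro k hk
    simp only [mem_filter, mem_univ, true_and] at hk
    simp only [mem_union, mem_filter, mem_univ, true_and]
    omega
  refine le_trans (card_le_card hsub) (le_trans (card_union_le _ _) ?_)
  have h1 : (univ.filter fun k : Fin n => (k:ℕ)+1 = a).card ≤ 1 := by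
    apply card_le_one.2
    intro x hx y hy
    simp only [mem_filter] at hx hy
    exact Fin.ext (by omega)
  have h2 : (univ.filter fun k : Fin n => (k:ℕ) = b).card ≤ 1 := by
    apply card_le_one.2
    intro x hx y hy
    simp only [mem_filter] at hx hy
    exact Fin.ext (by omega)
  omega

/-- For a partition `Q` of the index set into `s+1` sets of size at least `t+1`
(with `m ≥ (s+1)(t+1)`), every geodesic jumps at most `2(s+1)` times in `a^Q_j`. -/
theorem aQ_inst_le (m s t : ℕ) (hm : (s + 1) * (t + 1) ≤ m)
    (Q : Finset (Finset (Fin m))) (hQcard : Q.card = s + 1)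
    (hQsize : ∀ S ∈ Q, t + 1 ≤ S.card)
    (hQdisj : ∀ S ∈ Q, ∀ T ∈ Q, S ≠ T → Disjoint S T)
    (hQcover : Q.biUnion id = univ) (j : Bool) :
    inst (aQ Q j) ≤ 2 * (s + 1) := by
  apply csSup_le'
  rintro x ⟨P, ⟨σ, hP⟩, rfl⟩
  have key := geo_formula hP
  classical
  set a : Finset (Fin m) → ℕ :=
    fun S => S.sup (fun i => if P 0 i = j then 0 else (σ i : ℕ) + 1) with ha
  set b : Finset (Fin m) → ℕ :=
    fun S => if h : S.Nonempty then S.inf' h (fun i => if P 0 i = j then (σ i : ℕ) else m)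
             else m with hb
  have hC : ∀ S ∈ Q, ∀ k : Fin (m+1),
      (∀ i ∈ S, P k i = j) ↔ (a S ≤ (k:ℕ) ∧ (k:ℕ) ≤ b S) := by
    intro S hSQ k
    have hne : S.Nonempty := Finset.card_pos.mp (lt_of_lt_of_le (Nat.succ_pos t) (hQsize S hSQ))
    have hiff : ∀ i ∈ S, (P k i = j ↔
        ((if P 0 i = j then 0 else (σ i : ℕ) + 1) ≤ (k:ℕ) ∧
         (k:ℕ) ≤ (if P 0 i = j then (σ i : ℕ) else m))) := by
      intro i hi
      have hk : (k:ℕ) ≤ m := Nat.lt_succ_iff.mp k.isLt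
      rw [key i k]
      by_cases h : P 0 i = j
      · rw [if_pos h, if_pos h]
        by_cases h2 : (k:ℕ) ≤ (σ i:ℕ)
        · rw [if_pos h2]
          exact ⟨fun _ => ⟨Nat.zero_le _, h2⟩, fun _ => h⟩
        · rw [if_neg h2]
          refine ⟨fun hh => ?_, fun hh => absurd hh.2 h2⟩
          rw [h] at hh
          exact absurd hh (Bool.not_ne_self j)
      · rw [if_neg h, if_neg h]
        have hnb : (!P 0 i) = j := by revert h; cases hpi : P 0 i <;> cases j <;> simp
        by_cases h2 : (k:ℕ) ≤ (σ i:ℕ)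
        · rw [if_pos h2]
          exact ⟨fun hh => absurd hh h, fun hh => absurd hh.1 (by omega)⟩
        · rw [if_neg h2]
          exact ⟨fun _ => ⟨by omega, hk⟩, fun _ => hnb⟩
    rw [ha, hb]
    simp only [dif_pos hne, Finset.sup_le_iff, Finset.le_inf'_iff]
    constructor
    · intro h
      exact ⟨fun i hi => ((hiff i hi).mp (h i hi)).1, fun i hi => ((hiff i hi).mp (h i hi)).2⟩
    · intro h i hi
      exact (hiff i hi).mpr ⟨h.1 i hi, h.2 i hi⟩
  have hsub : (univ.filter fun k : Fin m => aQ Q j (P k.succ) ≠ aQ Q j (P k.castSucc)) ⊆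
      Q.biUnion (fun S => univ.filter fun k : Fin m =>
        ¬((a S ≤ (k:ℕ)+1 ∧ (k:ℕ)+1 ≤ b S) ↔ (a S ≤ (k:ℕ) ∧ (k:ℕ) ≤ b S))) := by
    intro k hk
    simp only [mem_filter, mem_univ, true_and] at hk
    simp only [mem_biUnion, mem_filter, mem_univ, true_and]
    unfold aQ at hk
    have hE : (∃ S ∈ Q, ∀ i ∈ S, P k.succ i = j) ↔ ¬(∃ S ∈ Q, ∀ i ∈ S, P k.castSucc i = j) := by
      by_cases e1 : ∃ S ∈ Q, ∀ i ∈ S, P k.succ i = j <;>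
        by_cases e2 : ∃ S ∈ Q, ∀ i ∈ S, P k.castSucc i = j <;>
        simp [e1, e2] at hk ⊢
    have hv1 : ((k.succ : Fin (m+1)) : ℕ) = (k:ℕ) + 1 := rfl
    have hv2 : ((k.castSucc : Fin (m+1)) : ℕ) = (k:ℕ) := rfl
    by_cases e1 : ∃ S ∈ Q, ∀ i ∈ S, P k.succ i = j
    · obtain ⟨S, hSQ, hSall⟩ := e1
      refine ⟨S, hSQ, ?_⟩
      have h1 : a S ≤ (k:ℕ)+1 ∧ (k:ℕ)+1 ≤ b S := by
        have := (hC S hSQ k.succ).mp hSall; rwa [hv1] at this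
      have h2 : ¬(a S ≤ (k:ℕ) ∧ (k:ℕ) ≤ b S) := by
        intro hcon
        have := (hC S hSQ k.castSucc).mpr (by rwa [hv2])
        exact (hE.mp ⟨S, hSQ, hSall⟩) ⟨S, hSQ, this⟩
      tauto
    · have e2 : ∃ S ∈ Q, ∀ i ∈ S, P k.castSucc i = j := by
        by_contra e2; exact e1 (hE.mpr e2)
      obtain ⟨S, hSQ, hSall⟩ := e2
      refine ⟨S, hSQ, ?_⟩
      have h1 : a S ≤ (k:ℕ) ∧ (k:ℕ) ≤ b S := by
        have := (hC S hSQ k.castSucc).mp hSall; rwa [hv2] at this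
      have h2 : ¬(a S ≤ (k:ℕ)+1 ∧ (k:ℕ)+1 ≤ b S) := by
        intro hcon
        have := (hC S hSQ k.succ).mpr (by rwa [hv1])
        exact e1 ⟨S, hSQ, this⟩
      tauto
  calc jumps (aQ Q j) P ≤ _ := card_le_card hsub
    _ ≤ ∑ S ∈ Q, (univ.filter fun k : Fin m =>
        ¬((a S ≤ (k:ℕ)+1 ∧ (k:ℕ)+1 ≤ b S) ↔ (a S ≤ (k:ℕ) ∧ (k:ℕ) ≤ b S))).card :=
      card_biUnion_le
    _ ≤ ∑ S ∈ Q, 2 := Finset.sum_le_sum fun S _ => interval_changes (a S) (b S)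
    _ = 2 * (s+1) := by rw [Finset.sum_const, hQcard]; ring
end

section
/- Let k be a positive odd integer, s >= 0 an integer, t = s + (k+1)/2, and n >= (s+1)(t+1) + k, and let Q be a partition of {k+1, ..., n} into s+1 sets each of size at least t+1. Then the colouring b_t^k = b_t^k(Q) respects the balls B_t(0^n) and B_t(1^n): b_t^k(x) = 0 for every x in H_n with at most t entries equal to 1, and b_t^k(x) = 1 for every x with at most t entries equal to 0. -/
open Finset

/-- The colouring `b_t^k(Q)`: if the majority of the first `k` entries is `1` it is
`a^Q_0` (colour `0` iff some set of `Q` is all `0`), and if the majority of the first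
`k` entries is `0` it is `a^Q_1` (colour `1` iff some set of `Q` is all `1`). -/
def bCol {n : ℕ} (k : ℕ) (Q : Finset (Finset (Fin n))) (x : Fin n → Bool) : Bool :=
  if k < 2 * firstOnes k x then
    (if ∃ S ∈ Q, ∀ i ∈ S, x i = false then false else true)
  else
    (if ∃ S ∈ Q, ∀ i ∈ S, x i = true then true else false)

lemma pigeon {n s k : ℕ} (Q : Finset (Finset (Fin n))) (b : Bool) (x : Fin n → Bool)
    (hQcard : Q.card = s + 1)
    (hQdisj : ∀ S ∈ Q, ∀ T ∈ Q, S ≠ T → Disjoint S T)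
    (hsub : ∀ S ∈ Q, ∀ i ∈ S, k ≤ i.val)
    (hbad : (univ.filter fun i : Fin n => k ≤ i.val ∧ x i = b).card ≤ s) :
    ∃ S ∈ Q, ∀ i ∈ S, x i = !b := by
  by_contra h
  push_neg at h
  have h' : ∀ S ∈ Q, ∃ i ∈ S, x i = b := by
    intro S hS
    obtain ⟨i, hi, hxi⟩ := h S hS
    exact ⟨i, hi, by cases hx : x i <;> cases b <;> simp_all⟩
  have hcard := Finset.card_biUnion
    (s := Q) (t := fun S => S.filter fun i => x i = b)
    (fun S hS T hT hST =>
      (hQdisj S hS T hT hST).mono (filter_subset _ _) (filter_subset _ _))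
  have hTsub : Q.biUnion (fun S => S.filter fun i => x i = b) ⊆
      univ.filter fun i : Fin n => k ≤ i.val ∧ x i = b := by
    intro i hi
    simp only [mem_biUnion, mem_filter] at hi ⊢
    obtain ⟨S, hS, hiS, hxi⟩ := hi
    exact ⟨mem_univ i, hsub S hS i hiS, hxi⟩
  have h1 : s + 1 ≤ (Q.biUnion (fun S => S.filter fun i => x i = b)).card := by
    rw [hcard]
    calc s + 1 = Q.card := hQcard.symm
    _ = ∑ _S ∈ Q, 1 := by simp
    _ ≤ ∑ S ∈ Q, (S.filter fun i => x i = b).card := by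
        apply Finset.sum_le_sum
        intro S hS
        obtain ⟨i, hi, hxi⟩ := h' S hS
        exact Finset.card_pos.mpr ⟨i, mem_filter.mpr ⟨hi, hxi⟩⟩
  have h2 := Finset.card_le_card hTsub
  omega

lemma split_count {n k : ℕ} (x : Fin n → Bool) (b : Bool) :
    (univ.filter fun i : Fin n => i.val < k ∧ x i = b).card +
    (univ.filter fun i : Fin n => k ≤ i.val ∧ x i = b).card ≤
    (univ.filter fun i : Fin n => x i = b).card := by
  rw [← Finset.card_union_of_disjoint]
  · apply Finset.card_le_card
    intro i hi
    simp only [mem_union, mem_filter, mem_univ, true_and] at hi ⊢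
    tauto
  · rw [Finset.disjoint_left]
    intro i hi hi'
    simp only [mem_filter] at hi hi'
    omega

lemma card_first {n k : ℕ} (h : k ≤ n) :
    (univ.filter fun i : Fin n => i.val < k).card = k := by
  have : (univ.filter fun i : Fin n => i.val < k) =
      (univ : Finset (Fin k)).map ⟨fun i => Fin.castLE h i, Fin.castLE_injective h⟩ := by
    ext i
    simp only [mem_filter, mem_univ, true_and, mem_map, Function.Embedding.coeFn_mk]
    constructor
    · intro hi; exact ⟨⟨i, hi⟩, rfl⟩
    · rintro ⟨j, rfl⟩; exact j.isLt
  rw [this]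
  simp

lemma first_split {n k : ℕ} (x : Fin n → Bool) (h : k ≤ n) :
    (univ.filter fun i : Fin n => i.val < k ∧ x i = true).card +
    (univ.filter fun i : Fin n => i.val < k ∧ x i = false).card = k := by
  have hd : Disjoint (univ.filter fun i : Fin n => i.val < k ∧ x i = true)
      (univ.filter fun i : Fin n => i.val < k ∧ x i = false) := by
    rw [Finset.disjoint_left]
    intro i hi hi'
    simp only [mem_filter] at hi hi'
    simp_all
  have hset : (univ.filter fun i : Fin n => i.val < k ∧ x i = true) ∪
      (univ.filter fun i : Fin n => i.val < k ∧ x i = false) =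
      (univ.filter fun i : Fin n => i.val < k) := by
    ext i
    simp only [mem_union, mem_filter, mem_univ, true_and]
    cases hx : x i <;> tauto
  rw [← Finset.card_union_of_disjoint hd, hset, card_first h]

/-- For `k` odd positive, `t = s + (k+1)/2`, `n ≥ (s+1)(t+1)+k`, and `Q` a partition
of the last `n-k` indices into `s+1` sets of size at least `t+1`, the colouring
`b_t^k(Q)` respects the balls `B_t(0^n)` and `B_t(1^n)`. -/
theorem bCol_respects (n k s t : ℕ) (hodd : Odd k) (hk : 0 < k)
    (ht : t = s + (k + 1) / 2) (hn : (s + 1) * (t + 1) + k ≤ n)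
    (Q : Finset (Finset (Fin n))) (hQcard : Q.card = s + 1)
    (hQsize : ∀ S ∈ Q, t + 1 ≤ S.card)
    (hQdisj : ∀ S ∈ Q, ∀ T ∈ Q, S ≠ T → Disjoint S T)
    (hQcover : Q.biUnion id = univ.filter fun i : Fin n => k ≤ i.val) :
    (∀ x : Fin n → Bool, onesCount x ≤ t → bCol k Q x = false) ∧
    (∀ x : Fin n → Bool, zerosCount x ≤ t → bCol k Q x = true) := by
  obtain ⟨m, hm⟩ := hodd
  have hpos : 0 < (s + 1) * (t + 1) := Nat.mul_pos (by omega) (by omega)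
  have hkn : k ≤ n := by omega
  have hsub : ∀ S ∈ Q, ∀ i ∈ S, k ≤ i.val := by
    intro S hS i hiS
    have : i ∈ Q.biUnion id := mem_biUnion.mpr ⟨S, hS, hiS⟩
    rw [hQcover] at this
    exact (mem_filter.mp this).2
  have hpig1 : ∀ x : Fin n → Bool, onesCount x ≤ t → k < 2 * firstOnes k x →
      ∃ S ∈ Q, ∀ i ∈ S, x i = false := by
    intro x hx hmaj
    have hbad : (univ.filter fun i : Fin n => k ≤ i.val ∧ x i = true).card ≤ s := by
      have h1 := split_count (k := k) x true
      unfold firstOnes at hmaj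
      unfold onesCount at hx
      omega
    obtain ⟨S, hS, hall⟩ := pigeon Q true x hQcard hQdisj hsub hbad
    exact ⟨S, hS, fun i hi => by simpa using hall i hi⟩
  have hpig2 : ∀ x : Fin n → Bool, zerosCount x ≤ t → ¬ (k < 2 * firstOnes k x) →
      ∃ S ∈ Q, ∀ i ∈ S, x i = true := by
    intro x hx hmaj
    have hbad : (univ.filter fun i : Fin n => k ≤ i.val ∧ x i = false).card ≤ s := by
      have h1 := split_count (k := k) x false
      have h2 := first_split (k := k) x hkn
      unfold firstOnes at hmaj
      unfold zerosCount at hx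
      omega
    obtain ⟨S, hS, hall⟩ := pigeon Q false x hQcard hQdisj hsub hbad
    exact ⟨S, hS, fun i hi => by simpa using hall i hi⟩
  have hno1 : ∀ x : Fin n → Bool, onesCount x ≤ t → ¬ ∃ S ∈ Q, ∀ i ∈ S, x i = true := by
    rintro x hx ⟨S, hS, hall⟩
    have : S.card ≤ onesCount x := by
      apply Finset.card_le_card
      intro i hi
      exact mem_filter.mpr ⟨mem_univ i, hall i hi⟩
    have := hQsize S hS
    omega
  have hno0 : ∀ x : Fin n → Bool, zerosCount x ≤ t → ¬ ∃ S ∈ Q, ∀ i ∈ S, x i = false := by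
    rintro x hx ⟨S, hS, hall⟩
    have : S.card ≤ zerosCount x := by
      apply Finset.card_le_card
      intro i hi
      exact mem_filter.mpr ⟨mem_univ i, hall i hi⟩
    have := hQsize S hS
    omega
  constructor
  · intro x hx
    unfold bCol
    split_ifs with hmaj hex hex
    · rfl
    · exact absurd (hpig1 x hx hmaj) hex
    · exact absurd hex (hno1 x hx)
    · rfl
  · intro x hx
    unfold bCol
    split_ifs with hmaj hex hex
    · exact absurd hex (hno0 x hx)
    · rfl
    · rfl
    · exact absurd (hpig2 x hx hmaj) hex
end

section
/- Let k be a positive odd integer, s >= 0 an integer, t = s + (k+1)/2 (so k <= 2t-1), and n >= (s+1)(t+1) + k = ((t+1)(2t+1) - k(t-1))/2, and let Q be a partition of {k+1, ..., n} into s+1 sets each of size at least t+1. Then inst(b_t^k(Q)) = 2t+1. -/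
open Finset

/-!
Along a geodesic the colour `bCol k Q` can only change at a step where the majority of the
first `k` entries changes, which happens at most `k` times since each of these coordinates
flips once, or where some set `S ∈ Q` becomes or stops being monochromatic. The times at which
`S` is all-`0` form an interval, and so do the times at which it is all-`1`. If `S` starts
monochromatic, one interval is initial and the other final; if it starts mixed, one of them is
empty. Either way `S` accounts for at most two jumps, so `inst ≤ k + 2 (s + 1) = 2 t + 1`.

For the matching geodesic, flip the first `k` coordinates in order, starting from alternating
values, so that the majority alternates while no set of `Q` is monochromatic. Then, for each
set of `Q` in turn, flip a coordinate that starts at `1` and then one that starts at `0`, all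
its other coordinates starting at `0` and flipping last: the set is all-`0` for exactly one
step. Each of the first `k + 2 (s + 1)` steps is then a jump.
-/

def changes (n : ℕ) (u : ℕ → Bool) : Finset (Fin n) :=
  {j | u (j + 1) ≠ u j}

section Changes

variable {n : ℕ} {u v : ℕ → Bool}

lemma changes_not : changes n (fun m => !u m) = changes n u := by
  simp [changes]

lemma changes_of_forall_eq_false (hu : ∀ m, u m = false) : changes n u = ∅ := by
  simp [changes, hu]

lemma changes_ite_subset (p : ℕ → Prop) [DecidablePred p] :
    changes n (fun m => if p m then u m else v m) ⊆
      changes n (fun m => decide (p m)) ∪ changes n u ∪ changes n v := by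
  intro j
  simp only [changes, mem_filter, mem_univ, true_and, mem_union]
  by_cases hj : p (j + 1) <;> by_cases hj' : p j <;> simp [hj, hj'] <;> tauto

lemma changes_and_subset : changes n (fun m => u m && v m) ⊆ changes n u ∪ changes n v := by
  intro j
  simp only [changes, mem_filter, mem_univ, true_and, mem_union]
  cases u j <;> cases v j <;> cases u (j + 1) <;> cases v (j + 1) <;> simp

lemma changes_exists_subset {ι : Type*} (Q : Finset ι) (p : ι → ℕ → Prop)
    [∀ S m, Decidable (p S m)] :
    changes n (fun m => decide (∃ S ∈ Q, p S m)) ⊆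
      Q.biUnion fun S => changes n fun m => decide (p S m) := by
  intro j hj
  simp only [changes, mem_filter, mem_univ, true_and, mem_biUnion] at hj ⊢
  by_contra! h
  exact hj (decide_eq_decide.mpr (exists_congr fun S => and_congr_right fun hS => by
    simpa using h S hS))

lemma card_changes_le_one_of_monotone (hu : Monotone u) : (changes n u).card ≤ 1 := by
  have hstep (j) (hj : j ∈ changes n u) : u j = false ∧ u (j + 1) = true := by
    simp only [changes, mem_filter, mem_univ, true_and] at hj
    have := hu (Nat.le_succ j)
    revert hj this; cases u j <;> cases u (j + 1) <;> simp
  have hlt (a) (ha : a ∈ changes n u) (b) (hb : b ∈ changes n u) : ¬ a < b := fun hab => by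
    simpa [(hstep a ha).2, (hstep b hb).1, Bool.le_iff_imp] using
      hu (show (a : ℕ) + 1 ≤ b from hab)
  exact card_le_one.mpr fun a ha b hb =>
    le_antisymm (not_lt.mp (hlt b hb a ha)) (not_lt.mp (hlt a ha b hb))

lemma card_changes_le_one_of_antitone (hu : Antitone u) : (changes n u).card ≤ 1 := by
  rw [← changes_not]
  refine card_changes_le_one_of_monotone fun a b h => ?_
  have := hu h
  revert this; cases u a <;> cases u b <;> decide

lemma card_changes_and_le_two (hu : Monotone u) (hv : Antitone v) :
    (changes n fun m => u m && v m).card ≤ 2 :=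
  calc _ ≤ (changes n u ∪ changes n v).card := card_le_card changes_and_subset
    _ ≤ (changes n u).card + (changes n v).card := card_union_le _ _
    _ ≤ 1 + 1 := add_le_add (card_changes_le_one_of_monotone hu)
      (card_changes_le_one_of_antitone hv)

lemma le_card_changes_of_eq_odd {K : ℕ} (hKn : K ≤ n) (hu : ∀ m ≤ K, u m = decide (Odd m)) :
    K ≤ (changes n u).card :=
  calc K = ({j | (j : ℕ) < K} : Finset (Fin n)).card := by
        rw [Fin.card_filter_val_lt, min_eq_right hKn]
    _ ≤ (changes n u).card := card_le_card fun j hj => by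
        simp only [mem_filter, mem_univ, true_and, changes] at hj ⊢
        simp [hu _ hj, hu _ hj.le, Nat.odd_add_one, -Nat.not_odd_iff_even]

end Changes

section Geodesic

variable {n : ℕ} (x₀ : Fin n → Bool) (σ : Equiv.Perm (Fin n))

def geodesicAt (m : ℕ) : Fin n → Bool :=
  fun ℓ => if (σ ℓ : ℕ) < m then !x₀ ℓ else x₀ ℓ

lemma geodesicAt_zero : geodesicAt x₀ σ 0 = x₀ := by
  funext ℓ; simp [geodesicAt]

lemma geodesicAt_succ_apply (j : ℕ) (ℓ : Fin n) :
    geodesicAt x₀ σ (j + 1) ℓ =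
      if (σ ℓ : ℕ) = j then !geodesicAt x₀ σ j ℓ else geodesicAt x₀ σ j ℓ := by
  unfold geodesicAt
  rcases lt_trichotomy (σ ℓ : ℕ) j with h | h | h
  · simp [h.ne, h, Nat.lt_succ_of_lt h]
  · simp [h]
  · simp [h.ne', h.not_gt, show ¬ (σ ℓ : ℕ) < j + 1 by omega]

lemma isGeodesic_geodesicAt : IsGeodesic fun j : Fin (n + 1) => geodesicAt x₀ σ j :=
  ⟨σ, fun j ℓ => by simpa [Fin.ext_iff] using geodesicAt_succ_apply x₀ σ j ℓ⟩

lemma IsGeodesic.eq_geodesicAt {P : Fin (n + 1) → Fin n → Bool} (hP : IsGeodesic P) :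
    ∃ σ : Equiv.Perm (Fin n), P = fun j : Fin (n + 1) => geodesicAt (P 0) σ j := by
  obtain ⟨σ, hσ⟩ := hP
  refine ⟨σ, funext fun j => ?_⟩
  induction j using Fin.induction with
  | zero => simp [geodesicAt_zero]
  | succ j ih =>
    funext ℓ
    simp [hσ j ℓ, ih, geodesicAt_succ_apply, Fin.ext_iff]

lemma jumps_geodesicAt (f : (Fin n → Bool) → Bool) :
    jumps f (fun j : Fin (n + 1) => geodesicAt x₀ σ j) =
      (changes n fun m => f (geodesicAt x₀ σ m)).card :=
  rfl

lemma card_changes_le_of_dependsOn {f : (Fin n → Bool) → Bool} {I : Finset (Fin n)}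
    (hf : DependsOn f (I : Set (Fin n))) :
    (changes n fun m => f (geodesicAt x₀ σ m)).card ≤ I.card := by
  refine (card_le_card (t := I.image σ) fun j hj => ?_).trans card_image_le
  simp only [changes, mem_filter, mem_univ, true_and] at hj
  by_contra hjI
  refine hj (hf fun i hi => ?_)
  have : (σ i : ℕ) ≠ j := fun h => hjI (mem_image.mpr ⟨i, hi, Fin.ext h⟩)
  simp [geodesicAt_succ_apply, this]

lemma geodesicAt_eq_iff (m : ℕ) (ℓ : Fin n) (b : Bool) :
    geodesicAt x₀ σ m ℓ = b ↔ (x₀ ℓ ≠ b → (σ ℓ : ℕ) < m) ∧ (x₀ ℓ = b → m ≤ σ ℓ) := by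
  unfold geodesicAt
  by_cases h : (σ ℓ : ℕ) < m <;> cases x₀ ℓ <;> cases b <;> simp [h] <;> omega

variable (S : Finset (Fin n))

lemma forall_geodesicAt_eq_iff (b : Bool) (m : ℕ) :
    (∀ ℓ ∈ S, geodesicAt x₀ σ m ℓ = b) ↔
      (∀ ℓ ∈ S, x₀ ℓ ≠ b → (σ ℓ : ℕ) < m) ∧ ∀ ℓ ∈ S, x₀ ℓ = b → m ≤ σ ℓ := by
  simp only [geodesicAt_eq_iff, ← forall_and]

lemma card_changes_forall_eq_le_two (b : Bool) :
    (changes n fun m => decide (∀ ℓ ∈ S, geodesicAt x₀ σ m ℓ = b)).card ≤ 2 := by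
  simp only [forall_geodesicAt_eq_iff, Bool.decide_and]
  refine card_changes_and_le_two (fun m m' hm => ?_) (fun m m' hm => ?_) <;>
    simp only [Bool.le_iff_imp, decide_eq_true_eq] <;>
    exact fun h ℓ hℓ hb => by have := h ℓ hℓ hb; omega

lemma card_changes_forall_eq_le_one {c : Bool} (hc : ∀ ℓ ∈ S, x₀ ℓ = c) (b : Bool) :
    (changes n fun m => decide (∀ ℓ ∈ S, geodesicAt x₀ σ m ℓ = b)).card ≤ 1 := by
  simp only [forall_geodesicAt_eq_iff]
  by_cases hb : c = b
  · subst hb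
    refine card_changes_le_one_of_antitone fun m m' hm => ?_
    simp only [Bool.le_iff_imp, decide_eq_true_eq]
    exact fun h => ⟨fun ℓ hℓ hne => absurd (hc ℓ hℓ) hne, fun ℓ hℓ hb => hm.trans (h.2 ℓ hℓ hb)⟩
  · refine card_changes_le_one_of_monotone fun m m' hm => ?_
    simp only [Bool.le_iff_imp, decide_eq_true_eq]
    exact fun h => ⟨fun ℓ hℓ hne => (h.1 ℓ hℓ hne).trans_le hm,
      fun ℓ hℓ hb' => absurd (hc ℓ hℓ ▸ hb') hb⟩

lemma not_forall_geodesicAt_eq {b : Bool} {ℓ₀ ℓ₁ : Fin n} (h₀ : ℓ₀ ∈ S) (h₁ : ℓ₁ ∈ S)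
    (hb₀ : x₀ ℓ₀ = b) (hb₁ : x₀ ℓ₁ ≠ b) (hσ : σ ℓ₀ ≤ σ ℓ₁) (m : ℕ) :
    ¬ ∀ ℓ ∈ S, geodesicAt x₀ σ m ℓ = b := by
  rw [forall_geodesicAt_eq_iff]
  rintro ⟨hne, heq⟩
  have := hne ℓ₁ h₁ hb₁
  have := heq ℓ₀ h₀ hb₀
  have : (σ ℓ₀ : ℕ) ≤ σ ℓ₁ := hσ
  omega

lemma card_changes_forall_eq_false_add_true_le_two :
    (changes n fun m => decide (∀ ℓ ∈ S, geodesicAt x₀ σ m ℓ = false)).card +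
      (changes n fun m => decide (∀ ℓ ∈ S, geodesicAt x₀ σ m ℓ = true)).card ≤ 2 := by
  by_cases hmono : ∃ c, ∀ ℓ ∈ S, x₀ ℓ = c
  · obtain ⟨c, hc⟩ := hmono
    have := card_changes_forall_eq_le_one x₀ σ S hc false
    have := card_changes_forall_eq_le_one x₀ σ S hc true
    omega
  push Not at hmono
  obtain ⟨ℓt, hℓt, ht⟩ := hmono false
  obtain ⟨ℓf, hℓf, hf⟩ := hmono true
  simp only [ne_eq, Bool.not_eq_false, Bool.not_eq_true] at ht hf
  rcases le_total (σ ℓf) (σ ℓt) with hσ | hσ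
  · rw [changes_of_forall_eq_false fun m => decide_eq_false
      (not_forall_geodesicAt_eq x₀ σ S hℓf hℓt hf (by simp [ht]) hσ m)]
    simpa using card_changes_forall_eq_le_two x₀ σ S true
  · rw [changes_of_forall_eq_false (u := fun m => decide (∀ ℓ ∈ S, geodesicAt x₀ σ m ℓ = true))
      fun m => decide_eq_false (not_forall_geodesicAt_eq x₀ σ S hℓt hℓf ht (by simp [hf]) hσ m)]
    simpa using card_changes_forall_eq_le_two x₀ σ S false

end Geodesic

section UpperBound

variable {n : ℕ} (k : ℕ) (Q : Finset (Finset (Fin n)))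

lemma bCol_eq_ite (x : Fin n → Bool) :
    bCol k Q x = if k < 2 * firstOnes k x then !decide (∃ S ∈ Q, ∀ i ∈ S, x i = false)
      else decide (∃ S ∈ Q, ∀ i ∈ S, x i = true) := by
  unfold bCol; split_ifs <;> simp_all

lemma dependsOn_firstOnes :
    DependsOn (firstOnes (n := n) k) ({i | (i : ℕ) < k} : Finset (Fin n)) := by
  intro x y hxy
  unfold firstOnes
  congr 1
  refine filter_congr fun i _ => and_congr_right fun hi => ?_
  rw [hxy i (by simpa using hi)]

lemma card_changes_bCol_le (x₀ : Fin n → Bool) (σ : Equiv.Perm (Fin n)) :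
    (changes n fun m => bCol k Q (geodesicAt x₀ σ m)).card ≤ k + 2 * Q.card := by
  have hmaj : (changes n fun m => decide (k < 2 * firstOnes k (geodesicAt x₀ σ m))).card ≤ k :=
    calc _ ≤ ({i | (i : ℕ) < k} : Finset (Fin n)).card :=
          card_changes_le_of_dependsOn x₀ σ (f := fun x => decide (k < 2 * firstOnes k x))
            fun _ _ hxy => by simp only [dependsOn_firstOnes k hxy]
      _ ≤ k := by rw [Fin.card_filter_val_lt]; exact min_le_right n k
  have hsets (b : Bool) :
      (changes n fun m => decide (∃ S ∈ Q, ∀ ℓ ∈ S, geodesicAt x₀ σ m ℓ = b)).card ≤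
        ∑ S ∈ Q, (changes n fun m => decide (∀ ℓ ∈ S, geodesicAt x₀ σ m ℓ = b)).card :=
    (card_le_card (changes_exists_subset Q _)).trans card_biUnion_le
  have hsum := sum_le_sum fun S (_ : S ∈ Q) => card_changes_forall_eq_false_add_true_le_two x₀ σ S
  rw [sum_add_distrib, sum_const, smul_eq_mul] at hsum
  have := hsets false
  have := hsets true
  simp only [bCol_eq_ite]
  calc _ ≤ _ := card_le_card (changes_ite_subset _)
    _ ≤ _ := (card_union_le _ _).trans (Nat.add_le_add_right (card_union_le _ _) _)
    _ ≤ k + 2 * Q.card := by rw [changes_not]; omega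

lemma jumps_bCol_le {P : Fin (n + 1) → Fin n → Bool} (hP : IsGeodesic P) :
    jumps (bCol k Q) P ≤ k + 2 * Q.card := by
  obtain ⟨σ, hσ⟩ := hP.eq_geodesicAt
  rw [hσ, jumps_geodesicAt]
  exact card_changes_bCol_le k Q (P 0) σ

end UpperBound

section Witness

variable {n : ℕ} (σ : Equiv.Perm (Fin n))

def oddStart (K : ℕ) : Fin n → Bool :=
  fun ℓ => decide (Odd (σ ℓ : ℕ) ∧ (σ ℓ : ℕ) < K)

lemma geodesicAt_oddStart {K m : ℕ} (hm : m ≤ K) (ℓ : Fin n) :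
    geodesicAt (oddStart σ K) σ m ℓ = decide ((σ ℓ : ℕ) < K ∧ (Odd (σ ℓ : ℕ) ↔ m ≤ σ ℓ)) := by
  unfold geodesicAt oddStart
  by_cases h : (σ ℓ : ℕ) < m
  · simp [h, h.trans_le hm, h.not_ge, ← Nat.not_even_iff_odd]
  · by_cases hK : (σ ℓ : ℕ) < K <;> simp [h, hK, not_lt.mp h]

def FlipsAt (S : Finset (Fin n)) (t K : ℕ) : Prop :=
  (∃ z ∈ S, (σ z : ℕ) = t) ∧ (∃ w ∈ S, (σ w : ℕ) = t + 1) ∧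
    ∀ ℓ ∈ S, (σ ℓ : ℕ) < K → (σ ℓ : ℕ) = t ∨ (σ ℓ : ℕ) = t + 1

variable {σ} {S : Finset (Fin n)} {t K m : ℕ}

lemma FlipsAt.forall_geodesicAt_eq_false_iff (hS : FlipsAt σ S t K) (ht : Odd t)
    (htK : t + 1 < K) (hm : m ≤ K) :
    (∀ ℓ ∈ S, geodesicAt (oddStart σ K) σ m ℓ = false) ↔ m = t + 1 := by
  obtain ⟨⟨z, hz, hσz⟩, ⟨w, hw, hσw⟩, hrest⟩ := hS
  have ht' : ¬ Odd (t + 1) := by simpa [Nat.odd_add_one] using ht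
  simp only [geodesicAt_oddStart σ hm, decide_eq_false_iff_not, not_and]
  refine ⟨fun h => ?_, fun h ℓ hℓ hK => ?_⟩
  · have h₁ : ¬ m ≤ t := fun hmt => h z hz (by omega) (by rw [hσz]; exact iff_of_true ht hmt)
    have h₂ : m ≤ t + 1 := by
      by_contra hmt
      exact h w hw (by omega) (by rw [hσw]; exact iff_of_false ht' hmt)
    omega
  · rcases hrest ℓ hℓ hK with hσ | hσ <;> simp [hσ, ht, ht', h]

lemma FlipsAt.not_forall_geodesicAt_eq_true (hS : FlipsAt σ S t K) (ht : Odd t) (hm : m ≤ K) :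
    ¬ ∀ ℓ ∈ S, geodesicAt (oddStart σ K) σ m ℓ = true := by
  obtain ⟨⟨z, hz, hσz⟩, ⟨w, hw, hσw⟩, -⟩ := hS
  have ht' : ¬ Odd (t + 1) := by simpa [Nat.odd_add_one] using ht
  simp only [geodesicAt_oddStart σ hm, decide_eq_true_eq]
  intro h
  have h₁ := (h z hz).2
  have h₂ := (h w hw).2
  rw [hσz] at h₁
  rw [hσw] at h₂
  have := h₁.mp ht
  have := h₂.not.mp ht'
  omega

lemma card_filter_odd_iff_le (k m : ℕ) :
    ((range k).filter fun a => Odd a ↔ m ≤ a).card = k / 2 + min m k % 2 := by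
  induction k with
  | zero => simp
  | succ k ih =>
    rw [range_add_one, filter_insert]
    split_ifs with h <;> rw [Nat.odd_iff] at h
    · rw [card_insert_of_notMem (by simp), ih]
      omega
    · rw [ih]
      omega

lemma firstOnes_geodesicAt_oddStart {k : ℕ} (hkn : k ≤ n)
    (hσk : ∀ a : Fin n, (a : ℕ) < k → (σ a : ℕ) = a) (hkK : k ≤ K) (hm : m ≤ K) :
    firstOnes k (geodesicAt (oddStart σ K) σ m) = k / 2 + min m k % 2 := by
  rw [← card_filter_odd_iff_le, firstOnes]
  refine card_bij (fun i _ => i) (fun i hi => ?_) (fun i _ j _ => Fin.ext) (fun a ha => ?_)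
  · simp only [mem_filter, mem_univ, true_and, geodesicAt_oddStart σ hm,
      decide_eq_true_eq] at hi
    rw [hσk i hi.1] at hi
    simpa [hi.1] using hi.2.2
  · simp only [mem_filter, mem_range] at ha
    refine ⟨⟨a, by omega⟩, ?_, rfl⟩
    simp [geodesicAt_oddStart σ hm, hσk ⟨a, _⟩ ha.1, ha.1, ha.2, show a < K by omega]

lemma bCol_geodesicAt_oddStart {k s : ℕ} (hk : Odd k) (hkn : k ≤ n)
    {Q : Finset (Finset (Fin n))} (ι : Q ≃ Fin (s + 1))
    (hσk : ∀ a : Fin n, (a : ℕ) < k → (σ a : ℕ) = a)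
    (hσQ : ∀ S : Q, FlipsAt σ S (k + 2 * ι S) (k + 2 * (s + 1))) (hm : m ≤ k + 2 * (s + 1)) :
    bCol k Q (geodesicAt (oddStart σ (k + 2 * (s + 1))) σ m) = decide (Odd m) := by
  have hodd (S : Q) : Odd (k + 2 * ι S) := hk.add_even (even_two_mul _)
  have hlt (S : Q) : k + 2 * ι S + 1 < k + 2 * (s + 1) := by have := (ι S).isLt; omega
  have hk2 : k % 2 = 1 := Nat.odd_iff.mp hk
  have hA₀ : (∃ S ∈ Q, ∀ ℓ ∈ S, geodesicAt (oddStart σ (k + 2 * (s + 1))) σ m ℓ = false) ↔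
      k < m ∧ m % 2 = 0 := by
    constructor
    · rintro ⟨S, hS, h⟩
      have := ((hσQ ⟨S, hS⟩).forall_geodesicAt_eq_false_iff (hodd _) (hlt _) hm).mp h
      omega
    · rintro ⟨hkm, hm2⟩
      let i : Fin (s + 1) := ⟨(m - k - 1) / 2, by omega⟩
      refine ⟨ι.symm i, (ι.symm i).2, ?_⟩
      refine ((hσQ _).forall_geodesicAt_eq_false_iff (hodd _) (hlt _) hm).mpr ?_
      simp only [Equiv.apply_symm_apply, i]
      omega
  have hA₁ : ¬ ∃ S ∈ Q, ∀ ℓ ∈ S, geodesicAt (oddStart σ (k + 2 * (s + 1))) σ m ℓ = true :=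
    fun ⟨S, hS, h⟩ => (hσQ ⟨S, hS⟩).not_forall_geodesicAt_eq_true (hodd _) hm h
  rw [bCol_eq_ite, firstOnes_geodesicAt_oddStart hkn hσk (by omega) hm]
  simp only [hA₀, hA₁, Nat.odd_iff]
  split_ifs
  · rw [← decide_not, decide_eq_decide]; omega
  · rw [decide_eq_decide, false_iff]; omega

lemma exists_perm_flipsAt {k s : ℕ} (hK : k + 2 * (s + 1) ≤ n) {Q : Finset (Finset (Fin n))}
    (ι : Q ≃ Fin (s + 1)) (hQtwo : ∀ S ∈ Q, 2 ≤ S.card)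
    (hQdisj : ∀ S ∈ Q, ∀ T ∈ Q, S ≠ T → Disjoint S T) (hQk : ∀ S ∈ Q, ∀ i ∈ S, k ≤ (i : ℕ)) :
    ∃ σ : Equiv.Perm (Fin n), (∀ a : Fin n, (a : ℕ) < k → (σ a : ℕ) = a) ∧
      ∀ S : Q, FlipsAt σ S (k + 2 * ι S) (k + 2 * (s + 1)) := by
  have hsame {S T : Q} {ℓ : Fin n} (hS : ℓ ∈ (S : Finset (Fin n)))
      (hT : ℓ ∈ (T : Finset (Fin n))) : S = T := by
    by_contra h
    exact disjoint_left.mp (hQdisj S S.2 T T.2 (Subtype.coe_ne_coe.mpr h)) hS hT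
  have hpair (S : Q) :
      ∃ g : Fin 2 → Fin n, Function.Injective g ∧ ∀ b, g b ∈ (S : Finset (Fin n)) := by
    obtain ⟨a, ha, b, hb, hab⟩ := one_lt_card.mp (hQtwo S S.2)
    refine ⟨![a, b], fun i j => ?_, fun i => ?_⟩ <;> fin_cases i <;> try fin_cases j
    all_goals simp [ha, hb, hab, Ne.symm hab]
  choose g hg hgS using hpair
  let coord : Fin k ⊕ (Q × Fin 2) → Fin n := Sum.elim (Fin.castLE (by omega)) fun p => g p.1 p.2
  let step : Fin k ⊕ (Q × Fin 2) ≃ Fin (k + (s + 1) * 2) :=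
    (Equiv.sumCongr (Equiv.refl _) ((ι.prodCongr (Equiv.refl _)).trans finProdFinEquiv)).trans
      finSumFinEquiv
  have hstep (S : Q) (b : Fin 2) : (step (.inr (S, b)) : ℕ) = k + 2 * ι S + b := by
    simp [step]; ring
  have hcoord : Function.Injective coord := by
    rintro (a | ⟨S, b⟩) (a' | ⟨S', b'⟩) h <;> simp only [coord, Sum.elim_inl, Sum.elim_inr] at h
    · rw [Fin.castLE_injective _ h]
    · have := hQk _ S'.2 _ (h ▸ hgS S' b'); simp at this; omega
    · have := hQk _ S.2 _ (h ▸ hgS S b); simp at this; omega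
    · obtain rfl := hsame (hgS S b) (h ▸ hgS S' b')
      rw [hg S h]
  obtain ⟨σ, hσ⟩ := Equiv.Perm.exists_extending_pair coord (Fin.castLE (by omega) ∘ step) hcoord
    ((Fin.castLE_injective _).comp step.injective)
  refine ⟨σ, fun a ha => ?_, fun S =>
    ⟨⟨g S 0, hgS S 0, ?_⟩, ⟨g S 1, hgS S 1, ?_⟩, fun ℓ hℓ hlt => ?_⟩⟩
  · simpa [coord, step] using congrArg Fin.val (hσ (.inl ⟨a, ha⟩))
  · simpa [coord, hstep] using congrArg Fin.val (hσ (.inr (S, 0)))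
  · simpa [coord, hstep] using congrArg Fin.val (hσ (.inr (S, 1)))
  · obtain ⟨x, hx⟩ := step.surjective ⟨σ ℓ, by omega⟩
    have hℓ' : coord x = ℓ := σ.injective (by rw [hσ]; ext; simp [hx])
    rcases x with a | ⟨T, b⟩
    · have := hQk _ S.2 _ hℓ; simp [coord, ← hℓ'] at this; omega
    · obtain rfl : T = S := hsame (by rw [← hℓ']; exact hgS T b) hℓ
      have := congrArg Fin.val hx
      rw [hstep] at this
      fin_cases b <;> simp at this <;> omega

end Witness

theorem inst_bCol_eq_general (n k s t : ℕ) (hodd : Odd k)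
    (ht : t = s + (k + 1) / 2) (hn : (s + 1) * (t + 1) + k ≤ n)
    (Q : Finset (Finset (Fin n))) (hQcard : Q.card = s + 1)
    (hQsize : ∀ S ∈ Q, t + 1 ≤ S.card)
    (hQdisj : ∀ S ∈ Q, ∀ T ∈ Q, S ≠ T → Disjoint S T)
    (hQcover : Q.biUnion id = univ.filter fun i : Fin n => k ≤ i.val) :
    inst (bCol k Q) = 2 * t + 1 := by
  have hK : 2 * t + 1 = k + 2 * (s + 1) := by obtain ⟨c, rfl⟩ := hodd; omega
  have hKn : k + 2 * (s + 1) ≤ n := by nlinarith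
  have hQk (S) (hS : S ∈ Q) (i) (hi : i ∈ S) : k ≤ (i : ℕ) := by
    simpa [hQcover] using (mem_biUnion (t := id)).mpr ⟨S, hS, hi⟩
  obtain ⟨σ, hσk, hσQ⟩ := exists_perm_flipsAt hKn (Q.equivFinOfCardEq hQcard)
    (fun S hS => by have := hQsize S hS; omega) hQdisj hQk
  have hlower := le_card_changes_of_eq_odd hKn fun m hm =>
    bCol_geodesicAt_oddStart hodd (by omega) _ hσk hσQ hm
  have hupper := jumps_bCol_le k Q (isGeodesic_geodesicAt (oddStart σ (k + 2 * (s + 1))) σ)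
  rw [jumps_geodesicAt, hQcard] at hupper
  rw [hK]
  refine IsGreatest.csSup_eq ⟨⟨_, isGeodesic_geodesicAt _ σ, le_antisymm hlower hupper⟩, ?_⟩
  rintro _ ⟨P, hP, rfl⟩
  simpa [hQcard] using jumps_bCol_le k Q hP

/-- For `k` odd positive, `t = s + (k+1)/2`, `n ≥ (s+1)(t+1)+k`, and `Q` a partition
of the last `n-k` indices into `s+1` sets of size at least `t+1`, the instability of
`b_t^k(Q)` equals `2t+1`. -/
theorem inst_bCol_eq (n k s t : ℕ) (hodd : Odd k) (hk : 0 < k)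
    (ht : t = s + (k + 1) / 2) (hn : (s + 1) * (t + 1) + k ≤ n)
    (Q : Finset (Finset (Fin n))) (hQcard : Q.card = s + 1)
    (hQsize : ∀ S ∈ Q, t + 1 ≤ S.card)
    (hQdisj : ∀ S ∈ Q, ∀ T ∈ Q, S ≠ T → Disjoint S T)
    (hQcover : Q.biUnion id = univ.filter fun i : Fin n => k ≤ i.val) :
    inst (bCol k Q) = 2 * t + 1 :=
  inst_bCol_eq_general n k s t hodd ht hn Q hQcard hQsize hQdisj hQcover
end

section
/- Let t >= 1. Then every colouring f of H_{2t+3} with t_f = t satisfies winst(f) >= 2 + (2t + (t mod 3))/3; that is, winst(2t+3, t) >= 2 + (2t + (t mod 3))/3 (note that 3 divides 2t + (t mod 3)). -/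
open Finset

/-- `f` respects the balls `B_t(0^n)` and `B_t(1^n)`: it is `0` on all points with at
most `t` ones and `1` on all points with at most `t` zeros. -/
def Respects {n : ℕ} (t : ℕ) (f : (Fin n → Bool) → Bool) : Prop :=
  (∀ x, onesCount x ≤ t → f x = false) ∧ (∀ x, zerosCount x ≤ t → f x = true)

/-- `t_f = t`: `t` is the largest radius whose balls `f` respects. -/
def tfEq {n : ℕ} (f : (Fin n → Bool) → Bool) (t : ℕ) : Prop :=
  Respects t f ∧ ¬ Respects (t+1) f

/-- `winst t f`: the maximum number of jumps of `f` over all well-ending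
`(t+1)`-geodesics (those starting with exactly `t+1` ones, whose first point has
colour `1` or whose last point has colour `0`). -/
noncomputable def winst {n : ℕ} (t : ℕ) (f : (Fin n → Bool) → Bool) : ℕ :=
  sSup {m | ∃ P : Fin (n+1) → Fin n → Bool, IsGeodesic P ∧ onesCount (P 0) = t + 1 ∧
    (f (P 0) = true ∨ f (P (Fin.last n)) = false) ∧ m = jumps f P}

/-!
A geodesic from `x` to its antipode `xᶜ` is an ordering of the coordinates. Since `t_f = t`, the
colouring is `0` on level `t` and `1` on level `t + 3`, so a walk that steps down while it sees
colour `1` and up while it sees colour `0` stays between these two levels and jumps about twice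
every three steps. If two `1`-coloured points of level `t + 1` have a common upper neighbour, a
start through both of them followed by this greedy walk gives the bound. If not, and dually no
two `0`-coloured points of level `t + 2` have a common lower neighbour, then from a `1`-coloured
point of level `t + 1` (which `t_f = t` provides, up to duality) a zigzag between levels `t + 1`
and `t + 2` can be steered to jump at each step, giving `2t` jumps; for `t = 1`, where this is one
short, an explicit path of five steps gives three. The dual colouring `x ↦ ¬ f xᶜ` exchanges the
roles of the two levels, and reading a path backwards through complements preserves its jumps.
-/

namespace Hypercube

variable {n : ℕ}

def toggle (x : Fin n → Bool) (i : Fin n) : Fin n → Bool := Function.update x i (!x i)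

lemma toggle_apply (x : Fin n → Bool) (i ℓ : Fin n) :
    toggle x i ℓ = if ℓ = i then !x ℓ else x ℓ := by
  by_cases h : ℓ = i <;> simp [toggle, h]

@[simp] lemma toggle_apply_self (x : Fin n → Bool) (i : Fin n) : toggle x i i = !x i := by
  simp [toggle]

@[simp] lemma toggle_apply_of_ne (x : Fin n → Bool) {i ℓ : Fin n} (h : ℓ ≠ i) :
    toggle x i ℓ = x ℓ := by
  simp [toggle, h]

@[simp] lemma toggle_toggle (x : Fin n → Bool) (i : Fin n) : toggle (toggle x i) i = x := by
  funext ℓ; by_cases h : ℓ = i <;> simp [h]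

lemma toggle_comm (x : Fin n → Bool) (i j : Fin n) :
    toggle (toggle x i) j = toggle (toggle x j) i := by
  funext ℓ; simp only [toggle_apply]; split_ifs <;> simp_all

@[simp] lemma toggle_compl (x : Fin n → Bool) (i : Fin n) : toggle xᶜ i = (toggle x i)ᶜ := by
  funext ℓ; by_cases h : ℓ = i <;> simp [h]

lemma onesCount_toggle (x : Fin n → Bool) (i : Fin n) :
    onesCount (toggle x i) = if x i = true then onesCount x - 1 else onesCount x + 1 := by
  unfold onesCount
  split_ifs with h
  · rw [← card_erase_of_mem (by simpa using h)]
    congr 1; ext ℓ; by_cases hℓ : ℓ = i <;> simp [hℓ, h]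
  · rw [← card_insert_of_notMem (by simpa using h)]
    congr 1; ext ℓ; by_cases hℓ : ℓ = i <;> simp_all

lemma onesCount_add_zerosCount (x : Fin n → Bool) : onesCount x + zerosCount x = n := by
  simp only [onesCount, zerosCount, card_filter, ← sum_add_distrib]
  calc _ = ∑ _ : Fin n, 1 := sum_congr rfl fun ℓ _ => by cases x ℓ <;> rfl
    _ = n := by simp

@[simp] lemma onesCount_compl (x : Fin n → Bool) : onesCount xᶜ = zerosCount x := by
  simp [onesCount, zerosCount]

@[simp] lemma zerosCount_compl (x : Fin n → Bool) : zerosCount xᶜ = onesCount x := by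
  simp [onesCount, zerosCount]

def movesTo (x z : Fin n → Bool) (b : Bool) : ℕ := #{ℓ | x ℓ = !b ∧ z ℓ = b}

lemma onesCount_add_movesTo (x z : Fin n → Bool) :
    onesCount x + movesTo x z true = onesCount z + movesTo x z false := by
  simp only [onesCount, movesTo, card_filter, ← sum_add_distrib]
  exact sum_congr rfl fun ℓ _ => by cases x ℓ <;> cases z ℓ <;> rfl

lemma movesTo_compl_true (x : Fin n → Bool) : movesTo x xᶜ true = zerosCount x := by
  simp [movesTo, zerosCount]

lemma movesTo_compl_false (x : Fin n → Bool) : movesTo x xᶜ false = onesCount x := by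
  simp [movesTo, onesCount]

lemma movesTo_toggle {x z : Fin n → Bool} {i : Fin n} (hi : x i ≠ z i) (b : Bool) :
    movesTo (toggle x i) z b = movesTo x z b - if z i = b then 1 else 0 := by
  have : ({ℓ | toggle x i ℓ = !b ∧ z ℓ = b} : Finset _)
      = ({ℓ | x ℓ = !b ∧ z ℓ = b} : Finset _).erase i := by
    ext ℓ; by_cases hℓ : ℓ = i
    · subst hℓ; cases b <;> cases h : x ℓ <;> simp_all
    · simp [hℓ]
  rw [movesTo, movesTo, this, card_erase_eq_ite]
  cases b <;> cases h : x i <;> simp_all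

lemma movesTo_toggle_add {x z : Fin n → Bool} {i : Fin n} (hi : x i ≠ z i) :
    movesTo (toggle x i) z true + movesTo (toggle x i) z false + 1 =
      movesTo x z true + movesTo x z false := by
  have hpos : 0 < movesTo x z (z i) := card_pos.mpr ⟨i, by cases h : z i <;> simp_all⟩
  cases h : z i <;> simp [movesTo_toggle hi, h] at hpos ⊢ <;> omega

lemma exists_of_movesTo_pos {x z : Fin n → Bool} {b : Bool} (h : 0 < movesTo x z b) :
    ∃ i, x i = !b ∧ z i = b := by
  obtain ⟨i, hi⟩ := card_pos.mp h
  exact ⟨i, by simpa using hi⟩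

lemma exists_pair_of_one_lt_movesTo {x z : Fin n → Bool} {b : Bool} (h : 1 < movesTo x z b) :
    ∃ i j, i ≠ j ∧ x i = !b ∧ z i = b ∧ x j = !b ∧ z j = b := by
  obtain ⟨i, j, hi, hj, hij⟩ := one_lt_card_iff.mp h
  simp only [mem_filter, mem_univ, true_and] at hi hj
  exact ⟨i, j, hij, hi.1, hi.2, hj.1, hj.2⟩

lemma eq_of_movesTo_eq_zero {x z : Fin n → Bool} (h₁ : movesTo x z true = 0)
    (h₀ : movesTo x z false = 0) : x = z := by
  simp only [movesTo, card_eq_zero, filter_eq_empty_iff, mem_univ, true_implies] at h₁ h₀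
  funext ℓ
  have h₁ℓ := @h₁ ℓ
  have h₀ℓ := @h₀ ℓ
  cases hx : x ℓ <;> cases hz : z ℓ <;> simp_all

lemma exists_two_ones {x : Fin n → Bool} (h : 1 < onesCount x) :
    ∃ i j, i ≠ j ∧ x i = true ∧ x j = true := by
  obtain ⟨i, j, hi, hj, hij⟩ := one_lt_card_iff.mp h
  exact ⟨i, j, hij, by simpa using hi, by simpa using hj⟩

lemma exists_three_zeros {x : Fin n → Bool} (h : 2 < zerosCount x) :
    ∃ i j l, i ≠ j ∧ i ≠ l ∧ j ≠ l ∧ x i = false ∧ x j = false ∧ x l = false := by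
  obtain ⟨i, j, l, hi, hj, hl, hij, hil, hjl⟩ := two_lt_card_iff.mp h
  exact ⟨i, j, l, hij, hil, hjl, by simpa using hi, by simpa using hj, by simpa using hl⟩

def toggleAlong (x : Fin n → Bool) (L : List (Fin n)) : Fin n → Bool := L.foldl toggle x

def jumpsAlong (f : (Fin n → Bool) → Bool) : (Fin n → Bool) → List (Fin n) → ℕ
  | _, [] => 0
  | x, i :: L => (if f (toggle x i) ≠ f x then 1 else 0) + jumpsAlong f (toggle x i) L

/-- A duplicate-free list of coordinates, toggled in order, is a shortest path. -/
def JumpsAtLeast (f : (Fin n → Bool) → Bool) (x z : Fin n → Bool) (k : ℕ) : Prop :=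
  ∃ L : List (Fin n), L.Nodup ∧ toggleAlong x L = z ∧ k ≤ jumpsAlong f x L

@[simp] lemma toggleAlong_nil (x : Fin n → Bool) : toggleAlong x [] = x := rfl

@[simp] lemma toggleAlong_cons (x : Fin n → Bool) (i : Fin n) (L : List (Fin n)) :
    toggleAlong x (i :: L) = toggleAlong (toggle x i) L := rfl

lemma toggleAlong_append (x : Fin n → Bool) (L₁ L₂ : List (Fin n)) :
    toggleAlong x (L₁ ++ L₂) = toggleAlong (toggleAlong x L₁) L₂ :=
  List.foldl_append

lemma toggleAlong_apply {L : List (Fin n)} (hL : L.Nodup) (x : Fin n → Bool) (ℓ : Fin n) :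
    toggleAlong x L ℓ = if ℓ ∈ L then !x ℓ else x ℓ := by
  induction L generalizing x with
  | nil => rfl
  | cons i L ih =>
    obtain ⟨hi, hL⟩ := List.nodup_cons.mp hL
    rw [toggleAlong_cons, ih hL]
    by_cases h : ℓ = i
    · subst h; simp [hi]
    · simp [h]

lemma jumpsAtLeast_zero (f : (Fin n → Bool) → Bool) (x z : Fin n → Bool) :
    JumpsAtLeast f x z 0 := by
  refine ⟨({ℓ | x ℓ ≠ z ℓ} : Finset _).toList, nodup_toList _, ?_, Nat.zero_le _⟩
  funext ℓ
  rw [toggleAlong_apply (nodup_toList _)]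
  cases hx : x ℓ <;> cases hz : z ℓ <;> simp [hx, hz]

namespace JumpsAtLeast

variable {f : (Fin n → Bool) → Bool} {x z : Fin n → Bool} {k : ℕ}

lemma mono {k' : ℕ} (h : JumpsAtLeast f x z k) (hk : k' ≤ k) : JumpsAtLeast f x z k' :=
  let ⟨L, hL, hend, hjumps⟩ := h
  ⟨L, hL, hend, hk.trans hjumps⟩

lemma cons {i : Fin n} (hi : x i ≠ z i) (h : JumpsAtLeast f (toggle x i) z k) :
    JumpsAtLeast f x z ((if f (toggle x i) ≠ f x then 1 else 0) + k) := by
  obtain ⟨L, hL, hend, hjumps⟩ := h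
  have hiL : i ∉ L := fun hmem => hi <| by
    rw [← hend, toggleAlong_apply hL, if_pos hmem, toggle_apply_self, Bool.not_not]
  exact ⟨i :: L, List.nodup_cons.mpr ⟨hiL, hL⟩, hend, by simp [jumpsAlong, hjumps]⟩

end JumpsAtLeast

lemma toggleAlong_take_succ (x : Fin n → Bool) (L : List (Fin n)) {j : ℕ} (hj : j < L.length) :
    toggleAlong x (L.take (j + 1)) = toggle (toggleAlong x (L.take j)) L[j] := by
  rw [List.take_add_one, List.getElem?_eq_getElem hj, toggleAlong_append]
  rfl

lemma jumpsAlong_eq_sum (f : (Fin n → Bool) → Bool) (x : Fin n → Bool) (L : List (Fin n)) :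
    jumpsAlong f x L = ∑ j ∈ range L.length,
      if f (toggleAlong x (L.take (j + 1))) ≠ f (toggleAlong x (L.take j)) then 1 else 0 := by
  induction L generalizing x with
  | nil => rfl
  | cons i L ih =>
    rw [jumpsAlong, ih, List.length_cons, sum_range_succ', add_comm]
    rfl

lemma isGeodesic_toggleAlong_take {L : List (Fin n)} (hL : L.Nodup) (hmem : ∀ ℓ, ℓ ∈ L)
    (hlen : L.length = n) (x : Fin n → Bool) :
    IsGeodesic fun j : Fin (n + 1) => toggleAlong x (L.take j) := by
  let σ : Equiv.Perm (Fin n) := (hL.getEquivOfForallMemList L hmem).symm.trans (finCongr hlen)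
  have hσ : ∀ ℓ j, σ ℓ = j ↔ ℓ = L[(j : ℕ)] := by
    intro ℓ j
    rw [Equiv.trans_apply, ← Equiv.eq_symm_apply, Equiv.symm_apply_eq]
    simp [List.Nodup.getEquivOfForallMemList]
  refine ⟨σ, fun j ℓ => ?_⟩
  have hj : (j : ℕ) < L.length := by rw [hlen]; exact j.isLt
  simp only [Fin.val_succ, Fin.val_castSucc, toggleAlong_take_succ x L hj, toggle_apply, hσ]

lemma jumps_toggleAlong_take (f : (Fin n → Bool) → Bool) (x : Fin n → Bool) {L : List (Fin n)}
    (hlen : L.length = n) :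
    jumps f (fun j : Fin (n + 1) => toggleAlong x (L.take j)) = jumpsAlong f x L := by
  rw [jumps, card_filter, jumpsAlong_eq_sum, hlen]
  exact Fin.sum_univ_eq_sum_range
    (fun j => if f (toggleAlong x (L.take (j + 1))) ≠ f (toggleAlong x (L.take j)) then 1 else 0) n

lemma le_winst_of_jumpsAtLeast {t k : ℕ} {f : (Fin n → Bool) → Bool} {x : Fin n → Bool}
    (hx : onesCount x = t + 1) (hend : f x = true ∨ f xᶜ = false)
    (h : JumpsAtLeast f x xᶜ k) : k ≤ winst t f := by
  obtain ⟨L, hL, hL_end, hk⟩ := h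
  have hmem : ∀ ℓ, ℓ ∈ L := fun ℓ => by
    by_contra hℓ
    simpa [toggleAlong_apply hL, hℓ] using congrFun hL_end ℓ
  have hlen : L.length = n := by
    simpa using Fintype.card_congr (hL.getEquivOfForallMemList L hmem)
  have hbdd : BddAbove {m | ∃ P : Fin (n+1) → Fin n → Bool, IsGeodesic P ∧
      onesCount (P 0) = t + 1 ∧ (f (P 0) = true ∨ f (P (Fin.last n)) = false) ∧
      m = jumps f P} :=
    ⟨n, by rintro _ ⟨P, -, -, -, rfl⟩; exact (card_filter_le _ _).trans (by simp)⟩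
  refine hk.trans (le_csSup hbdd ⟨_, isGeodesic_toggleAlong_take hL hmem hlen x, by simpa, ?_,
    (jumps_toggleAlong_take f x hlen).symm⟩)
  simpa [← hlen, hL_end] using hend

def dual (f : (Fin n → Bool) → Bool) : (Fin n → Bool) → Bool := fun x => !f xᶜ

@[simp] lemma dual_apply (f : (Fin n → Bool) → Bool) (x : Fin n → Bool) : dual f x = !f xᶜ :=
  rfl

@[simp] lemma dual_dual (f : (Fin n → Bool) → Bool) : dual (dual f) = f := by
  funext x; simp

lemma _root_.Respects.dual {t : ℕ} {f : (Fin n → Bool) → Bool} (h : Respects t f) :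
    Respects t (dual f) :=
  ⟨fun x hx => by simp [h.2 xᶜ (by simpa using hx)],
    fun x hx => by simp [h.1 xᶜ (by simpa using hx)]⟩

lemma _root_.Respects.eq_true {t : ℕ} {f : (Fin n → Bool) → Bool} (h : Respects t f)
    {x : Fin n → Bool} (hx : n ≤ onesCount x + t) : f x = true :=
  h.2 x (by have := onesCount_add_zerosCount x; omega)

lemma exists_of_not_respects_succ {t : ℕ} {f : (Fin n → Bool) → Bool} (hR : Respects t f)
    (h : ¬ Respects (t + 1) f) :
    (∃ a, onesCount a = t + 1 ∧ f a = true) ∨ (∃ a, onesCount a = t + 1 ∧ dual f a = true) := by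
  simp only [Respects, not_and_or, not_forall, Bool.not_eq_false, Bool.not_eq_true] at h
  rcases h with ⟨x, hx, hfx⟩ | ⟨x, hx, hfx⟩
  · have : ¬ onesCount x ≤ t := fun h => by simp [hR.1 x h] at hfx
    exact .inl ⟨x, by omega, hfx⟩
  · have : ¬ zerosCount x ≤ t := fun h => by simp [hR.2 x h] at hfx
    exact .inr ⟨xᶜ, by simp; omega, by simp [hfx]⟩

lemma toggleAlong_compl (x : Fin n → Bool) (L : List (Fin n)) :
    toggleAlong xᶜ L = (toggleAlong x L)ᶜ := by
  induction L generalizing x with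
  | nil => rfl
  | cons i L ih => simp [ih]

lemma toggleAlong_toggleAlong_reverse (x : Fin n → Bool) (L : List (Fin n)) :
    toggleAlong (toggleAlong x L) L.reverse = x := by
  induction L generalizing x with
  | nil => rfl
  | cons i L ih => simp [toggleAlong_append, ih]

lemma jumpsAlong_append (f : (Fin n → Bool) → Bool) (x : Fin n → Bool) (L₁ L₂ : List (Fin n)) :
    jumpsAlong f x (L₁ ++ L₂) = jumpsAlong f x L₁ + jumpsAlong f (toggleAlong x L₁) L₂ := by
  induction L₁ generalizing x with
  | nil => simp [jumpsAlong]
  | cons i L ih => simp [jumpsAlong, ih, add_assoc]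

lemma jumpsAlong_reverse (f : (Fin n → Bool) → Bool) (x : Fin n → Bool) (L : List (Fin n)) :
    jumpsAlong f (toggleAlong x L) L.reverse = jumpsAlong f x L := by
  induction L generalizing x with
  | nil => rfl
  | cons i L ih =>
    rw [toggleAlong_cons, List.reverse_cons, jumpsAlong_append, ih,
      toggleAlong_toggleAlong_reverse]
    simp [jumpsAlong, ne_comm, add_comm]

lemma jumpsAlong_dual (f : (Fin n → Bool) → Bool) (x : Fin n → Bool) (L : List (Fin n)) :
    jumpsAlong (dual f) x L = jumpsAlong f xᶜ L := by
  induction L generalizing x with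
  | nil => rfl
  | cons i L ih => simp [jumpsAlong, ih]

/-- Run backwards through complements, a path of `dual f` from `x` to `xᶜ` is a path of `f`. -/
lemma JumpsAtLeast.of_dual {f : (Fin n → Bool) → Bool} {x : Fin n → Bool} {k : ℕ}
    (h : JumpsAtLeast (dual f) x xᶜ k) : JumpsAtLeast f x xᶜ k := by
  obtain ⟨L, hL, hend, hk⟩ := h
  have hx : toggleAlong xᶜ L = x := by rw [toggleAlong_compl, hend, compl_compl]
  refine ⟨L.reverse, List.nodup_reverse.mpr hL, ?_, ?_⟩
  · calc toggleAlong x L.reverse = toggleAlong (toggleAlong xᶜ L) L.reverse := by rw [hx]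
      _ = xᶜ := toggleAlong_toggleAlong_reverse _ _
  · calc k ≤ jumpsAlong f xᶜ L := jumpsAlong_dual f x L ▸ hk
      _ = jumpsAlong f (toggleAlong xᶜ L) L.reverse := (jumpsAlong_reverse f _ L).symm
      _ = jumpsAlong f x L.reverse := by rw [hx]

def OnesSeparated (k : ℕ) (f : (Fin n → Bool) → Bool) : Prop :=
  ∀ w i j, onesCount w = k → i ≠ j → w i = true → w j = true →
    f (toggle w i) = false ∨ f (toggle w j) = false

def ZerosSeparated (k : ℕ) (f : (Fin n → Bool) → Bool) : Prop :=
  ∀ w i j, onesCount w = k → i ≠ j → w i = false → w j = false →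
    f (toggle w i) = true ∨ f (toggle w j) = true

lemma zerosSeparated_of_dual {k m : ℕ} {f : (Fin n → Bool) → Bool}
    (h : OnesSeparated k (dual f)) (hkm : k + m = n) : ZerosSeparated m f := by
  intro w i j hw hij hi hj
  have hwc : onesCount wᶜ = k := by
    have := onesCount_add_zerosCount w
    rw [onesCount_compl]; omega
  simpa using h wᶜ i j hwc hij (by simpa) (by simpa)

/-- The number of jumps guaranteed to the greedy walk of `exists_greedy_step` with `u` coordinates
still to be raised and `d` to be lowered, from colour `c` to the final colour `e`. -/
def greedyBound (u d : ℕ) (c e : Bool) : ℕ :=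
  if c = e then 2 * ((min d (u - c.toNat) + 2) / 3) else 2 * (min u (d + c.toNat) / 3) + 1

lemma greedyBound_le_down {u d : ℕ} {c' : Bool} (e : Bool) (hd : 1 ≤ d) (hud : u ≤ d + 1)
    (hdu : d ≤ u + 1) (hc' : u = d + 1 → c' = false) :
    greedyBound u d true e ≤ (if c' ≠ true then 1 else 0) + greedyBound u (d - 1) c' e := by
  cases c' <;> cases e <;> simp [greedyBound] at hc' ⊢ <;> omega

lemma greedyBound_le_up {u d : ℕ} {c c' : Bool} (e : Bool) (hu : 1 ≤ u) (hdu : d ≤ u)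
    (hud : u ≤ d + 2) (hc : c = true → d = 0 ∧ u = 1) (hc' : d = u → c' = true) :
    greedyBound u d c e ≤ (if c' ≠ c then 1 else 0) + greedyBound (u - 1) d c' e := by
  cases c <;> cases c' <;> cases e <;> simp [greedyBound] at hc hc' ⊢ <;> omega

lemma le_greedyBound (t : ℕ) (e : Bool) : (2 * t + t % 3) / 3 ≤ greedyBound (t + 1) t true e := by
  cases e <;> simp [greedyBound] <;> omega

section Walks

variable {k : ℕ} {f : (Fin n → Bool) → Bool} {z : Fin n → Bool}

/-- The greedy walk steps down while it sees colour `1` and up while it sees colour `0`; it stays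
between levels `k` and `k + 3`, where the colours are forced. -/
lemma exists_greedy_step (hlow : ∀ y, onesCount y = k → f y = false)
    (hhigh : ∀ y, onesCount y = k + 3 → f y = true) (hz : onesCount z = k + 2)
    {x : Fin n → Bool} (hx₁ : k ≤ onesCount x) (hx₂ : onesCount x ≤ k + 3)
    (hxz : 0 < movesTo x z true + movesTo x z false) :
    ∃ i, x i ≠ z i ∧ k ≤ onesCount (toggle x i) ∧ onesCount (toggle x i) ≤ k + 3 ∧
      greedyBound (movesTo x z true) (movesTo x z false) (f x) (f z) ≤
        (if f (toggle x i) ≠ f x then 1 else 0) + greedyBound (movesTo (toggle x i) z true)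
          (movesTo (toggle x i) z false) (f (toggle x i)) (f z) := by
  have hlevel := onesCount_add_movesTo x z
  have hlow_x : f x = true → onesCount x ≠ k := fun h h' => by simp [hlow x h'] at h
  have hhigh_x : f x = false → onesCount x ≠ k + 3 := fun h h' => by simp [hhigh x h'] at h
  by_cases hdown : f x = true ∧ 1 ≤ movesTo x z false
  · obtain ⟨i, hxi, hzi⟩ := exists_of_movesTo_pos (x := x) (z := z) (b := false) (by omega)
    have hi : x i ≠ z i := by simp [hxi, hzi]
    have hlev : onesCount (toggle x i) = onesCount x - 1 := by simp [onesCount_toggle, hxi]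
    have := hlow_x hdown.1
    refine ⟨i, hi, by omega, by omega, ?_⟩
    simp only [movesTo_toggle hi, hzi, hdown.1, Bool.false_eq_true, if_false, if_true,
      Nat.sub_zero]
    exact greedyBound_le_down _ (by omega) (by omega) (by omega) (fun h => hlow _ (by omega))
  · have hc : f x = true → movesTo x z false = 0 := fun h => by
      by_contra h'; exact hdown ⟨h, by omega⟩
    have hup : 1 ≤ movesTo x z true ∧ movesTo x z false ≤ movesTo x z true := by
      cases hfx : f x
      · have := hhigh_x hfx; omega
      · have := hc hfx; omega
    obtain ⟨i, hxi, hzi⟩ := exists_of_movesTo_pos (x := x) (z := z) (b := true) hup.1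
    have hi : x i ≠ z i := by simp [hxi, hzi]
    have hlev : onesCount (toggle x i) = onesCount x + 1 := by simp [onesCount_toggle, hxi]
    refine ⟨i, hi, by omega, by omega, ?_⟩
    simp only [movesTo_toggle hi, hzi, Bool.true_eq_false, if_false, if_true, Nat.sub_zero]
    refine greedyBound_le_up _ hup.1 hup.2 (by omega) (fun h => ⟨hc h, ?_⟩)
      (fun h => hhigh _ (by omega))
    have := hc h; have := hlow_x h; omega

theorem jumpsAtLeast_greedy (hlow : ∀ y, onesCount y = k → f y = false)
    (hhigh : ∀ y, onesCount y = k + 3 → f y = true) (hz : onesCount z = k + 2)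
    (x : Fin n → Bool) (hx₁ : k ≤ onesCount x) (hx₂ : onesCount x ≤ k + 3) :
    JumpsAtLeast f x z (greedyBound (movesTo x z true) (movesTo x z false) (f x) (f z)) := by
  obtain ⟨s, hs⟩ : ∃ s, movesTo x z true + movesTo x z false = s := ⟨_, rfl⟩
  induction s generalizing x with
  | zero =>
    obtain rfl := eq_of_movesTo_eq_zero (x := x) (z := z) (by omega) (by omega)
    simpa [hs, greedyBound, show movesTo x x true = 0 by omega,
      show movesTo x x false = 0 by omega] using jumpsAtLeast_zero f x x
  | succ s ih =>
    obtain ⟨i, hi, hy₁, hy₂, hle⟩ := exists_greedy_step hlow hhigh hz hx₁ hx₂ (by omega)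
    have hs' := movesTo_toggle_add hi
    exact ((ih (toggle x i) hy₁ hy₂ (by omega)).cons hi).mono hle

/-- Between levels `k + 1` and `k`, the separation hypotheses let every step down reach colour `0`
and every step up reach colour `1`. -/
theorem jumpsAtLeast_zigzag (hA : OnesSeparated (k + 1) f) (hB : ZerosSeparated k f)
    (hz : onesCount z = k + 1) (m : ℕ) (x : Fin n → Bool) (hfx : f x = true)
    (hu : movesTo x z true = m + 1) (hd : movesTo x z false = m + 1) :
    JumpsAtLeast f x z (2 * m) := by
  induction m generalizing x with
  | zero => exact jumpsAtLeast_zero f x z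
  | succ m ih =>
    have hx : onesCount x = k + 1 := by have := onesCount_add_movesTo x z; omega
    obtain ⟨i, hxi, hzi, hfi⟩ : ∃ i, x i = true ∧ z i = false ∧ f (toggle x i) = false := by
      obtain ⟨i₁, i₂, hne, hx₁, hz₁, hx₂, hz₂⟩ :=
        exists_pair_of_one_lt_movesTo (x := x) (z := z) (b := false) (by omega)
      rcases hA x i₁ i₂ hx hne hx₁ hx₂ with h | h
      exacts [⟨i₁, hx₁, hz₁, h⟩, ⟨i₂, hx₂, hz₂, h⟩]
    have hi : x i ≠ z i := by simp [hxi, hzi]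
    set y := toggle x i
    have hy : onesCount y = k := by simp [y, onesCount_toggle, hxi, hx]
    have hyu : movesTo y z true = m + 2 := by simp [y, movesTo_toggle hi, hzi, hu]
    have hyd : movesTo y z false = m + 1 := by simp [y, movesTo_toggle hi, hzi, hd]
    obtain ⟨j, hyj, hzj, hfj⟩ : ∃ j, y j = false ∧ z j = true ∧ f (toggle y j) = true := by
      obtain ⟨j₁, j₂, hne, hy₁, hz₁, hy₂, hz₂⟩ :=
        exists_pair_of_one_lt_movesTo (x := y) (z := z) (b := true) (by omega)
      rcases hB y j₁ j₂ hy hne hy₁ hy₂ with h | h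
      exacts [⟨j₁, hy₁, hz₁, h⟩, ⟨j₂, hy₂, hz₂, h⟩]
    have hj : y j ≠ z j := by simp [hyj, hzj]
    have hpath := ((ih (toggle y j) hfj (by simp [movesTo_toggle hj, hzj, hyu])
      (by simp [movesTo_toggle hj, hzj, hyd])).cons hj).cons hi
    refine hpath.mono ?_
    simp [y, hfx, hfi, hfj]
    omega

end Walks

def HasGeodesicWithJumps (t : ℕ) (f : (Fin n → Bool) → Bool) (k : ℕ) : Prop :=
  ∃ x, onesCount x = t + 1 ∧ f x = true ∧ JumpsAtLeast f x xᶜ k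

lemma HasGeodesicWithJumps.mono {t k k' : ℕ} {f : (Fin n → Bool) → Bool}
    (h : HasGeodesicWithJumps t f k) (hk : k' ≤ k) : HasGeodesicWithJumps t f k' :=
  let ⟨x, hx, hfx, hp⟩ := h
  ⟨x, hx, hfx, hp.mono hk⟩

lemma le_winst_of_hasGeodesicWithJumps {t k : ℕ} {f : (Fin n → Bool) → Bool}
    (h : HasGeodesicWithJumps t f k ∨ HasGeodesicWithJumps t (dual f) k) : k ≤ winst t f := by
  rcases h with ⟨x, hx, hfx, hp⟩ | ⟨x, hx, hfx, hp⟩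
  · exact le_winst_of_jumpsAtLeast hx (.inl hfx) hp
  · exact le_winst_of_jumpsAtLeast hx (.inr (by simpa using hfx)) hp.of_dual

section TwoStrips

variable {t : ℕ} {f : (Fin (2 * t + 3) → Bool) → Bool}

lemma onesCount_compl_eq_add_two {a : Fin (2 * t + 3) → Bool} (ha : onesCount a = t + 1) :
    onesCount aᶜ = t + 2 := by
  have := onesCount_add_zerosCount a
  rw [onesCount_compl]; omega

/-- Two `1`-coloured points `w - i`, `w - j` of level `t + 1`: from the first, go down to level
`t` and up to the second, two jumps, then finish greedily. -/
theorem hasGeodesicWithJumps_of_not_onesSeparated (hR : Respects t f)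
    (h : ¬ OnesSeparated (t + 2) f) : HasGeodesicWithJumps t f (2 + (2 * t + t % 3) / 3) := by
  simp only [OnesSeparated, not_forall, not_or, Bool.not_eq_false] at h
  obtain ⟨w, i, j, hw, hij, hwi, hwj, hfi, hfj⟩ := h
  set a := toggle w i
  have ha : onesCount a = t + 1 := by simp [a, onesCount_toggle, hwi, hw]
  have haj : a j = true := by simp [a, Ne.symm hij, hwj]
  have hai : a i = false := by simp [a, hwi]
  have hb : toggle (toggle a j) i = toggle w j := by simp [a, toggle_comm w i j]
  have hfa₁ : f (toggle a j) = false := hR.1 _ (by simp [onesCount_toggle, haj, ha])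
  have hi₁ : a j ≠ aᶜ j := by simp
  have hi₂ : toggle a j i ≠ aᶜ i := by simp [hij]
  have hza := onesCount_add_zerosCount a
  have hu : movesTo (toggle (toggle a j) i) aᶜ true = t + 1 := by
    simp [movesTo_toggle hi₂, movesTo_toggle hi₁, movesTo_compl_true, haj, hai]; omega
  have hd : movesTo (toggle (toggle a j) i) aᶜ false = t := by
    simp [movesTo_toggle hi₂, movesTo_toggle hi₁, movesTo_compl_false, haj, hai, ha]
  have hgreedy := jumpsAtLeast_greedy (k := t) (fun y hy => hR.1 y hy.le)
    (fun y hy => hR.eq_true (by omega)) (onesCount_compl_eq_add_two ha) (toggle (toggle a j) i)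
    (by simp [hb, onesCount_toggle, hwj, hw]) (by simp [hb, onesCount_toggle, hwj, hw])
  rw [hu, hd, show f (toggle (toggle a j) i) = true from hb ▸ hfj] at hgreedy
  refine ⟨a, ha, hfi, ((hgreedy.cons hi₂).cons hi₁).mono ?_⟩
  have := le_greedyBound t (f aᶜ)
  simp [hb, hfj, hfa₁, hfi]
  omega

/-- Down from `a` (a jump), across to a swap-neighbour of `a` (colour `0` by separation), up to
colour `1` (a jump), then zigzag. -/
theorem hasGeodesicWithJumps_two_mul (ht : 1 ≤ t) (hR : Respects t f)
    (hA : OnesSeparated (t + 2) f) (hB : ZerosSeparated (t + 1) f) {a : Fin (2 * t + 3) → Bool}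
    (ha : onesCount a = t + 1) (hfa : f a = true) : HasGeodesicWithJumps t f (2 * t) := by
  have hza := onesCount_add_zerosCount a
  obtain ⟨i, -, -, hai, -⟩ := exists_two_ones (x := a) (by omega)
  obtain ⟨j, j₁, j₂, hjj₁, hjj₂, hj₁j₂, haj, haj₁, haj₂⟩ := exists_three_zeros (x := a) (by omega)
  have hne : ∀ {p q}, a p ≠ a q → p ≠ q := ne_of_apply_ne a
  have hfa₁ : f (toggle (toggle a i) j) = false := by
    rcases hA (toggle a j) j i (by simp [onesCount_toggle, haj, ha]) (hne (by simp [hai, haj]))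
      (by simp [haj]) (by simp [hne, hai, haj]) with h | h
    · simp [hfa] at h
    · rwa [toggle_comm] at h
  obtain ⟨j', hj'j, haj', hfb⟩ :
      ∃ j', j' ≠ j ∧ a j' = false ∧ f (toggle (toggle (toggle a i) j) j') = true := by
    rcases hB (toggle (toggle a i) j) j₁ j₂ (by simp [onesCount_toggle, hne, hai, haj, ha]) hj₁j₂
      (by simp [hne, hai, haj₁, hjj₁.symm]) (by simp [hne, hai, haj₂, hjj₂.symm]) with h | h
    exacts [⟨j₁, hjj₁.symm, haj₁, h⟩, ⟨j₂, hjj₂.symm, haj₂, h⟩]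
  have h₁ : a i ≠ aᶜ i := by simp
  have h₂ : toggle a i j ≠ aᶜ j := by simp [hne, hai, haj]
  have h₃ : toggle (toggle a i) j j' ≠ aᶜ j' := by simp [hne, hai, haj', hj'j]
  have hzig := jumpsAtLeast_zigzag hA hB (onesCount_compl_eq_add_two ha) (t - 1) _ hfb
    (by simp [movesTo_toggle h₃, movesTo_toggle h₂, movesTo_toggle h₁, movesTo_compl_true,
      hai, haj, haj']; omega)
    (by simp [movesTo_toggle h₃, movesTo_toggle h₂, movesTo_toggle h₁, movesTo_compl_false,
      hai, haj, haj', ha]; omega)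
  refine ⟨a, ha, hfa, (((hzig.cons h₃).cons h₂).cons h₁).mono ?_⟩
  have hfa₀ : f (toggle a i) = false := hR.1 _ (by simp [onesCount_toggle, hai, ha])
  simp [hfa, hfa₀, hfa₁, hfb]
  omega

end TwoStrips

/-- With `a` having ones `ia, ib` and zeros `jl, ju, jv`, toggling `ia, ju, jv, ib, jl` in this
order passes through colours `1, 0, 0, 1, 0`. -/
theorem jumpsAtLeast_three_of_five {f : (Fin 5 → Bool) → Bool} (hR : Respects 1 f)
    (hA : OnesSeparated 3 f) {a : Fin 5 → Bool} (ha : onesCount a = 2) (hfa : f a = true)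
    {ia ib jl ju jv : Fin 5} (hab : ia ≠ ib) (hlu : jl ≠ ju) (hlv : jl ≠ jv) (huv : ju ≠ jv)
    (hia : a ia = true) (hib : a ib = true) (hjl : a jl = false) (hju : a ju = false)
    (hjv : a jv = false) (hl : f (toggle aᶜ jl) = false)
    (hb : f (toggle (toggle (toggle a ia) ju) jv) = true) : JumpsAtLeast f a aᶜ 3 := by
  have hne : ∀ {p q}, a p ≠ a q → p ≠ q := ne_of_apply_ne a
  have hcover : ∀ ℓ, ℓ = ia ∨ ℓ = ib ∨ ℓ = jl ∨ ℓ = ju ∨ ℓ = jv := by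
    have hnd : [ia, ib, jl, ju, jv].Nodup := by
      simp [hne, hia, hib, hjl, hju, hjv, hab, hlu, hlv, huv]
    have huniv := eq_univ_of_card [ia, ib, jl, ju, jv].toFinset
      (by rw [List.toFinset_card_of_nodup hnd]; rfl)
    intro ℓ
    have hℓ : ℓ ∈ [ia, ib, jl, ju, jv].toFinset := by rw [huniv]; exact mem_univ ℓ
    simpa using hℓ
  have hy₁ : f (toggle a ia) = false := hR.1 _ (by simp [onesCount_toggle, hia, ha])
  have hy₂ : f (toggle (toggle a ia) ju) = false := by
    rcases hA (toggle a ju) ju ia (by simp [onesCount_toggle, hju, ha]) (hne (by simp [hia, hju]))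
      (by simp [hju]) (by simp [hne, hia, hju]) with h | h
    · simp [hfa] at h
    · rwa [toggle_comm] at h
  have hy₄ : f (toggle (toggle (toggle (toggle a ia) ju) jv) ib) = false := by
    convert hl using 2
    funext ℓ
    rcases hcover ℓ with rfl | rfl | rfl | rfl | rfl <;>
      simp [hne, hia, hib, hjl, hju, hjv, hab, hab.symm, hlu, hlu.symm, hlv,
        hlv.symm, huv, huv.symm]
  have hpath := ((((jumpsAtLeast_zero f (toggle (toggle (toggle (toggle a ia) ju) jv) ib) aᶜ).cons
    (i := ib) (by simp [hne, hib, hju, hjv, hab.symm])).cons (i := jv)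
    (by simp [hne, hia, hjv, huv.symm])).cons (i := ju) (by simp [hne, hia, hju])).cons
    (i := ia) (by simp)
  refine hpath.mono ?_
  simp [hfa, hy₁, hy₂, hb, hy₄]

theorem hasGeodesicWithJumps_three {f : (Fin 5 → Bool) → Bool} (hR : Respects 1 f)
    (hA : OnesSeparated 3 f) (hB : ZerosSeparated 2 f) {a : Fin 5 → Bool}
    (ha : onesCount a = 2) (hfa : f a = true) : HasGeodesicWithJumps 1 f 3 := by
  have hza := onesCount_add_zerosCount a
  obtain ⟨i₁, i₂, hi, hai₁, hai₂⟩ := exists_two_ones (x := a) (by omega)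
  obtain ⟨j₁, j₂, j₃, h₁₂, h₁₃, h₂₃, haj₁, haj₂, haj₃⟩ := exists_three_zeros (x := a) (by omega)
  have hne : ∀ {p q}, a p ≠ a q → p ≠ q := ne_of_apply_ne a
  have hup : ∀ {ju jv}, ju ≠ jv → a ju = false → a jv = false → ∃ ia ib, ia ≠ ib ∧
      a ia = true ∧ a ib = true ∧ f (toggle (toggle (toggle a ia) ju) jv) = true := by
    intro ju jv huv hju hjv
    rcases hB (toggle (toggle (toggle (toggle a i₁) ju) i₂) jv) i₁ i₂
      (by simp [onesCount_toggle, hne, hai₁, hai₂, hju, hjv, hi.symm, huv.symm, ha])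
      hi (by simp [hne, hai₁, hju, hjv, hi]) (by simp [hne, hai₂, hju, hjv, hi.symm]) with h | h
    · refine ⟨i₂, i₁, hi.symm, hai₂, hai₁, ?_⟩
      convert h using 2
      funext ℓ; simp only [toggle_apply]; split_ifs <;> simp_all
    · refine ⟨i₁, i₂, hi, hai₁, hai₂, ?_⟩
      convert h using 2
      funext ℓ; simp only [toggle_apply]; split_ifs <;> simp_all
  refine ⟨a, ha, hfa, ?_⟩
  rcases hA aᶜ j₁ j₂ (by simp; omega) h₁₂ (by simp [haj₁]) (by simp [haj₂]) with hl | hl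
  · obtain ⟨ia, ib, hab, hia, hib, hb⟩ := hup h₂₃ haj₂ haj₃
    exact jumpsAtLeast_three_of_five hR hA ha hfa hab h₁₂ h₁₃ h₂₃ hia hib haj₁ haj₂ haj₃ hl hb
  · obtain ⟨ia, ib, hab, hia, hib, hb⟩ := hup h₁₃ haj₁ haj₃
    exact jumpsAtLeast_three_of_five hR hA ha hfa hab h₁₂.symm h₂₃ h₁₃ hia hib haj₂ haj₁ haj₃
      hl hb

theorem hasGeodesicWithJumps_of_separated {t : ℕ} {f : (Fin (2 * t + 3) → Bool) → Bool}
    (ht : 1 ≤ t) (hR : Respects t f) (hA : OnesSeparated (t + 2) f)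
    (hB : ZerosSeparated (t + 1) f) (h : ∃ a, onesCount a = t + 1 ∧ f a = true) :
    HasGeodesicWithJumps t f (2 + (2 * t + t % 3) / 3) := by
  obtain ⟨a, ha, hfa⟩ := h
  obtain rfl | ht := eq_or_lt_of_le ht
  · exact hasGeodesicWithJumps_three hR hA hB ha hfa
  · exact (hasGeodesicWithJumps_two_mul ht.le hR hA hB ha hfa).mono (by omega)

end Hypercube

open Hypercube

/-- For `t ≥ 1`, every colouring `f` of `H_{2t+3}` with `t_f = t` satisfies
`winst f ≥ 2 + (2t + (t mod 3))/3`; that is, `winst(2t+3,t) ≥ 2 + (2t + (t mod 3))/3`. -/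
theorem winst_twostrips (t : ℕ) (ht : 1 ≤ t) :
    ∀ f : (Fin (2 * t + 3) → Bool) → Bool, tfEq f t →
      2 + (2 * t + t % 3) / 3 ≤ winst t f := by
  rintro f ⟨hR, hR₁⟩
  have hzeros : ∀ g : (Fin (2 * t + 3) → Bool) → Bool,
      OnesSeparated (t + 2) (dual g) → ZerosSeparated (t + 1) g :=
    fun g h => zerosSeparated_of_dual h (by ring)
  apply le_winst_of_hasGeodesicWithJumps
  by_cases hA : OnesSeparated (t + 2) f
  · by_cases hA' : OnesSeparated (t + 2) (dual f)
    · rcases exists_of_not_respects_succ hR hR₁ with ha | ha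
      · exact .inl (hasGeodesicWithJumps_of_separated ht hR hA (hzeros f hA') ha)
      · exact .inr (hasGeodesicWithJumps_of_separated ht hR.dual hA'
          (hzeros _ (by rwa [dual_dual])) ha)
    · exact .inr (hasGeodesicWithJumps_of_not_onesSeparated hR.dual hA')
  · exact .inl (hasGeodesicWithJumps_of_not_onesSeparated hR hA)
end

section
/- For every colouring f of H_6 with t_f = 2, there exist points x, y, z of H_6, each with exactly 3 entries equal to 1, such that x and y differ in exactly 2 entries, y and z differ in exactly 2 entries, x and z differ in exactly 4 entries, and f(x) = f(y) = f(z). -/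
open Finset

/-- Seven explicit points of `H₆`, each with exactly three ones. -/
def pts : Fin 7 → (Fin 6 → Bool) :=
  ![![true,true,true,false,false,false],
    ![true,true,false,true,false,false],
    ![true,true,false,false,true,false],
    ![true,true,false,false,false,true],
    ![true,false,true,true,false,false],
    ![true,false,true,false,true,false],
    ![true,false,false,true,false,true]]

set_option maxRecDepth 10000 in
/-- Any two-colouring of seven points contains one of seven monochromatic triples. -/
lemma key (v : Fin 7 → Bool) :
    (v 4 = v 0 ∧ v 0 = v 2) ∨ (v 4 = v 1 ∧ v 1 = v 3) ∨ (v 5 = v 0 ∧ v 0 = v 3) ∨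
    (v 5 = v 2 ∧ v 2 = v 1) ∨ (v 6 = v 1 ∧ v 1 = v 0) ∨ (v 6 = v 3 ∧ v 3 = v 2) ∨
    (v 6 = v 4 ∧ v 4 = v 5) := by
  revert v; decide

/-- For every colouring `f` of `H₆` with `t_f = 2` there are points `x`, `y`, `z`,
each with exactly `3` ones, with `x` and `y` differing in exactly `2` entries, `y` and
`z` differing in exactly `2` entries, `x` and `z` differing in exactly `4` entries,
and `f x = f y = f z`. -/
theorem three_equal_points (f : (Fin 6 → Bool) → Bool) (hf : tfEq f 2) :
    ∃ x y z : Fin 6 → Bool, onesCount x = 3 ∧ onesCount y = 3 ∧ onesCount z = 3 ∧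
      (univ.filter fun i => x i ≠ y i).card = 2 ∧
      (univ.filter fun i => y i ≠ z i).card = 2 ∧
      (univ.filter fun i => x i ≠ z i).card = 4 ∧
      f x = f y ∧ f y = f z := by
  rcases key (fun i => f (pts i)) with ⟨h1, h2⟩|⟨h1, h2⟩|⟨h1, h2⟩|⟨h1, h2⟩|⟨h1, h2⟩|⟨h1, h2⟩|⟨h1, h2⟩
  · exact ⟨pts 4, pts 0, pts 2, by decide, by decide, by decide, by decide, by decide, by decide, h1, h2⟩
  · exact ⟨pts 4, pts 1, pts 3, by decide, by decide, by decide, by decide, by decide, by decide, h1, h2⟩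
  · exact ⟨pts 5, pts 0, pts 3, by decide, by decide, by decide, by decide, by decide, by decide, h1, h2⟩
  · exact ⟨pts 5, pts 2, pts 1, by decide, by decide, by decide, by decide, by decide, by decide, h1, h2⟩
  · exact ⟨pts 6, pts 1, pts 0, by decide, by decide, by decide, by decide, by decide, by decide, h1, h2⟩
  · exact ⟨pts 6, pts 3, pts 2, by decide, by decide, by decide, by decide, by decide, by decide, h1, h2⟩
  · exact ⟨pts 6, pts 4, pts 5, by decide, by decide, by decide, by decide, by decide, by decide, h1, h2⟩
end
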